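/- arXiv:math/0411250 — 12 statements merged into one kernel-verified Lean document; each statement's English description precedes it below -/
import Mathlib

section
/- Consider a generating tree defined by an ECO-system with axiom (s0) and rules (k) ↝ (e1(k))...(ek(k)), where each node labeled k has k children with labels e_i(k) ≥ 1. If σ(k) := e1(k)+...+ek(k) = αk + β is an affine function of k, then the sequence f_n counting nodes at level n satisfies f_{n+2} = α f_{n+1} + β f_n with f_0 = 1, f_1 = s0; equivalently the generating function is F(z) = (1 + (s0 - α)z)/(1 - αz - βz²). -/
open PowerSeries

/-!
Since every node labelled `k` has exactly `k` children, the number of nodes at level `n + 1` is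
the sum `s n` of the labels at level `n`; since the children of `k` carry labels summing to
`α k + β`, we get `s (n + 1) = α s n + β f n`. Eliminating `s` gives the recurrence, and a linear
recurrence of order two is the same thing as the rational generating function.
-/

namespace Multiset

variable (e : ℕ → List ℕ) (M : Multiset ℕ)

theorem card_bind_eq_sum_of_length (hlen : ∀ k ∈ M, (e k).length = k) :
    card (M.bind fun k => (e k : Multiset ℕ)) = M.sum := by
  rw [card_bind]
  conv_rhs => rw [← map_id' M]
  exact congrArg sum (map_congr rfl fun k hk => by simpa using hlen k hk)

theorem sum_bind_eq_of_sum_affine (α β : ℤ) (hsum : ∀ k ∈ M, ((e k).sum : ℤ) = α * k + β) :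
    ((M.bind fun k => (e k : Multiset ℕ)).sum : ℤ) = α * M.sum + β * card M := by
  rw [sum_bind, Nat.cast_multiset_sum, map_map]
  have hmap : M.map (((↑) : ℕ → ℤ) ∘ fun k => (e k : Multiset ℕ).sum)
      = M.map fun k : ℕ => α * (k : ℤ) + β :=
    map_congr rfl fun k hk => by simpa using hsum k hk
  rw [hmap, sum_map_add, sum_map_mul_left, Nat.cast_multiset_sum]
  simp [mul_comm]

end Multiset

namespace PowerSeries

variable {R : Type*} [CommRing R]

theorem mul_mk_eq_of_linear_recurrence (a b : R) (g : ℕ → R)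
    (hrec : ∀ n, g (n + 2) = a * g (n + 1) + b * g n) :
    (1 - C a * X - C b * X ^ 2) * mk g = C (g 0) + C (g 1 - a * g 0) * X := by
  have expand : (1 - C a * X - C b * X ^ 2) * mk g
      = mk g - C a * (X * mk g) - C b * (X * (X * mk g)) := by ring
  rw [expand]
  ext (_ | _ | n)
  · simp
  · simp
  · simp [coeff_succ_X_mul, hrec n]

end PowerSeries

/-- for an ECO-system whose production sums are affine, σ(k) = αk + β,
the level counting sequence satisfies f_{n+2} = α f_{n+1} + β f_n with f_0 = 1, f_1 = s0;
equivalently (1 - αz - βz²) F(z) = 1 + (s0 - α) z. -/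
theorem stmt_0 (s0 : ℕ) (hs0 : 1 ≤ s0) (e : ℕ → List ℕ) (α β : ℤ)
    (hlen : ∀ k, 1 ≤ k → (e k).length = k)
    (hpos : ∀ k, 1 ≤ k → ∀ l ∈ e k, 1 ≤ l)
    (hsum : ∀ k, 1 ≤ k → ((e k).sum : ℤ) = α * k + β)
    (levels : ℕ → Multiset ℕ)
    (hlev0 : levels 0 = {s0})
    (hlev : ∀ n, levels (n + 1) = (levels n).bind (fun k => (e k : Multiset ℕ)))
    (f : ℕ → ℕ) (hf : ∀ n, f n = Multiset.card (levels n)) :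
    (f 0 = 1 ∧ f 1 = s0 ∧ ∀ n, (f (n + 2) : ℤ) = α * f (n + 1) + β * f n) ∧
    (1 - C (α : ℚ) * X - C (β : ℚ) * X ^ 2) * mk (fun n => (f n : ℚ))
      = 1 + C ((s0 : ℚ) - (α : ℚ)) * X := by
  have labels_pos : ∀ n, ∀ k ∈ levels n, 1 ≤ k := by
    intro n
    induction n with
    | zero => simpa [hlev0] using hs0
    | succ n ih =>
      simp only [hlev, Multiset.mem_bind, Multiset.mem_coe]
      rintro l ⟨k, hk, hlk⟩
      exact hpos k (ih k hk) l hlk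
  have card_succ (n : ℕ) : f (n + 1) = (levels n).sum := by
    rw [hf, hlev, Multiset.card_bind_eq_sum_of_length]
    exact fun k hk => hlen k (labels_pos n k hk)
  have sum_succ (n : ℕ) : ((levels (n + 1)).sum : ℤ) = α * (levels n).sum + β * f n := by
    rw [hf, hlev, Multiset.sum_bind_eq_of_sum_affine]
    exact fun k hk => hsum k (labels_pos n k hk)
  have hf0 : f 0 = 1 := by simp [hf, hlev0]
  have hf1 : f 1 = s0 := by simp [card_succ, hlev0]
  have hrec (n : ℕ) : (f (n + 2) : ℤ) = α * f (n + 1) + β * f n := by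
    rw [card_succ, card_succ, sum_succ]
  refine ⟨⟨hf0, hf1, hrec⟩, ?_⟩
  rw [mul_mk_eq_of_linear_recurrence _ _ _ fun n => by exact_mod_cast hrec n]
  simp [hf0, hf1]
end

section
/- For the ECO-system with axiom (2) and rules (k) ↝ (2)^{k-1}(k+1), the number f_n of nodes at level n satisfies f_{n+2} = 3 f_{n+1} - f_n with f_0 = 1, f_1 = 2; hence f_n = F_{2n+1} is the Fibonacci number of odd index (with F_1 = F_2 = 1), and F(z) = (1 - z)/(1 - 3z + z²). -/
open PowerSeries

/-!
All labels are positive, and a node labelled `k` has `k` children whose labels sum to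
`3k - 1`. Hence, writing `s_n` for the sum of the labels at level `n`, we get
`f_{n+1} = s_n` and `s_{n+1} = 3 s_n - f_n`, i.e. `f_{n+2} + f_n = 3 f_{n+1}`. The odd-index
Fibonacci numbers satisfy the same recurrence with the same initial values, and the
recurrence multiplies the generating function by `1 - 3z + z²` down to a polynomial of
degree one.
-/

def ecoChildren (k : ℕ) : Multiset ℕ := (List.replicate (k - 1) 2 ++ [k + 1] : List ℕ)

lemma one_le_of_mem_ecoChildren {k x : ℕ} (hx : x ∈ ecoChildren k) : 1 ≤ x := by
  simp only [ecoChildren, Multiset.mem_coe, List.mem_append, List.mem_replicate,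
    List.mem_singleton] at hx
  omega

lemma card_ecoChildren {k : ℕ} (hk : 1 ≤ k) : Multiset.card (ecoChildren k) = k := by
  simp only [ecoChildren, Multiset.coe_card, List.length_append, List.length_replicate,
    List.length_singleton]
  omega

lemma sum_ecoChildren_add_one {k : ℕ} (hk : 1 ≤ k) : (ecoChildren k).sum + 1 = 3 * k := by
  simp only [ecoChildren, Multiset.sum_coe, List.sum_append, List.sum_replicate, smul_eq_mul,
    List.sum_singleton]
  omega

section Bind

variable {m : Multiset ℕ}

lemma one_le_of_mem_bind_ecoChildren {x : ℕ} (hx : x ∈ m.bind ecoChildren) : 1 ≤ x := by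
  obtain ⟨k, -, hxk⟩ := Multiset.mem_bind.1 hx
  exact one_le_of_mem_ecoChildren hxk

lemma card_bind_ecoChildren (hm : ∀ k ∈ m, 1 ≤ k) :
    Multiset.card (m.bind ecoChildren) = m.sum := by
  rw [Multiset.card_bind, Function.comp_def,
    Multiset.map_congr rfl fun k hk => card_ecoChildren (hm k hk), Multiset.map_id']

lemma sum_bind_ecoChildren_add_card (hm : ∀ k ∈ m, 1 ≤ k) :
    (m.bind ecoChildren).sum + Multiset.card m = 3 * m.sum := by
  induction m using Multiset.induction_on with
  | empty => simp
  | cons a s ih =>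
    have ha := sum_ecoChildren_add_one (hm a (Multiset.mem_cons_self a s))
    have hs := ih fun k hk => hm k (Multiset.mem_cons_of_mem hk)
    simp only [Multiset.cons_bind, Multiset.sum_add, Multiset.card_cons, Multiset.sum_cons]
    omega

end Bind

theorem PowerSeries.mul_mk_of_linearRecurrence {R : Type*} [CommRing R] (a b : R) (f : ℕ → R)
    (h : ∀ n, f (n + 2) = a * f (n + 1) + b * f n) :
    (1 - C a * X - C b * X ^ 2) * mk f = C (f 0) + C (f 1 - a * f 0) * X := by
  ext (_ | _ | n)
  · simp
  · simp [sub_mul, mul_assoc, coeff_succ_X_mul, coeff_X_pow_mul']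
  · simp [sub_mul, mul_assoc, coeff_succ_X_mul, coeff_X_pow_mul', h]

theorem Nat.fib_add_four_add (n : ℕ) : fib (n + 4) + fib n = 3 * fib (n + 2) := by
  have h2 : fib (n + 2) = fib n + fib (n + 1) := fib_add_two
  have h3 : fib (n + 3) = fib (n + 1) + fib (n + 2) := fib_add_two
  have h4 : fib (n + 4) = fib (n + 2) + fib (n + 3) := fib_add_two
  omega

lemma eq_of_add_eq_three_mul {f g : ℕ → ℕ} (hf : ∀ n, f (n + 2) + f n = 3 * f (n + 1))
    (hg : ∀ n, g (n + 2) + g n = 3 * g (n + 1)) (h0 : f 0 = g 0) (h1 : f 1 = g 1) : f = g := by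
  suffices ∀ n, f n = g n ∧ f (n + 1) = g (n + 1) from funext fun n => (this n).1
  intro n
  induction n with
  | zero => exact ⟨h0, h1⟩
  | succ n ih => exact ⟨ih.2, show f (n + 2) = g (n + 2) by have := hf n; have := hg n; omega⟩

/-- for the ECO-system with axiom (2) and rules (k) ↝ (2)^{k-1}(k+1),
the level counts satisfy f_{n+2} = 3 f_{n+1} - f_n with f_0 = 1, f_1 = 2, hence
f_n = Fib(2n+1), and (1 - 3z + z²) F(z) = 1 - z. -/
theorem stmt_2 (levels : ℕ → Multiset ℕ)
    (hlev0 : levels 0 = {2})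
    (hlev : ∀ n, levels (n + 1) =
      (levels n).bind (fun k => ((List.replicate (k - 1) 2 ++ [k + 1] : List ℕ) : Multiset ℕ)))
    (f : ℕ → ℕ) (hf : ∀ n, f n = Multiset.card (levels n)) :
    f 0 = 1 ∧ f 1 = 2 ∧ (∀ n, f (n + 2) + f n = 3 * f (n + 1)) ∧
    (∀ n, f n = Nat.fib (2 * n + 1)) ∧
    (1 - 3 * X + X ^ 2) * mk (fun n => (f n : ℚ)) = 1 - X := by
  have hpos : ∀ n, ∀ k ∈ levels n, 1 ≤ k
    | 0, k, hk => by simp_all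
    | n + 1, k, hk => one_le_of_mem_bind_ecoChildren (hlev n ▸ hk)
  have hf_succ (n : ℕ) : f (n + 1) = (levels n).sum := by
    rw [hf, hlev, ← card_bind_ecoChildren (hpos n)]; rfl
  have hf0 : f 0 = 1 := by simp [hf, hlev0]
  have hf1 : f 1 = 2 := by simp [hf_succ, hlev0]
  have hrec (n : ℕ) : f (n + 2) + f n = 3 * f (n + 1) := by
    rw [hf_succ, hf_succ, hf, hlev]
    exact sum_bind_ecoChildren_add_card (hpos n)
  have hf_fib : f = fun n => Nat.fib (2 * n + 1) :=
    eq_of_add_eq_three_mul hrec (fun n => Nat.fib_add_four_add (2 * n + 1)) hf0 hf1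
  refine ⟨hf0, hf1, hrec, congrFun hf_fib, ?_⟩
  have hrecℚ (n : ℕ) : (f (n + 2) : ℚ) = 3 * f (n + 1) + (-1) * f n := by
    have := congrArg (Nat.cast : ℕ → ℚ) (hrec n)
    push_cast at this
    linarith
  have hC : (1 - 3 * X + X ^ 2 : ℚ⟦X⟧) = 1 - C 3 * X - C (-1) * X ^ 2 := by
    rw [map_neg, map_one, ← map_ofNat C 3]; ring
  rw [hC, mul_mk_of_linearRecurrence 3 (-1) (fun n => (f n : ℚ)) hrecℚ, hf0, hf1]
  norm_num
  ring
end

section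
/- Consider an ECO-system where two rules apply according to the parity of the label: σ_0(k) = αk + β_0 for even k and σ_1(k) = αk + β_1 for odd k (σ_i being the sum of the produced labels), and assume exactly m odd labels occur among the children of every node. Then the number of nodes at level n satisfies the linear recurrence f_{n+3} = α f_{n+2} + β_0 f_{n+1} + m(β_1 - β_0) f_n, equivalently F(z) = (1 + (s0 - α)z + (s1 - αs0 - β_0)z²)/(1 - αz - β_0 z² - m(β_1 - β_0)z³). -/
/-!
A node with label `k` has exactly `k` children, so `f (n + 1)` is the label sum `s n` of level `n`.
Splitting level `n` by parity, the production rules give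
`s (n + 1) = α s n + β₀ f n + (β₁ - β₀) · #(odd labels at level n)`, and the odd labels at
level `n + 1` number `m f n` since every node of level `n` contributes `m` of them. Substituting
yields the three-term recurrence, which is the stated identity of generating functions.
-/

open PowerSeries

namespace Multiset

variable {α β M : Type*}

theorem sum_map_ite_zero [AddCommMonoid M] (s : Multiset α) (p : α → Prop) [DecidablePred p]
    (c : M) : (s.map fun a => if p a then c else 0).sum = card (s.filter p) • c := by
  induction s using Multiset.induction with
  | empty => simp
  | cons a s ih => by_cases h : p a <;> simp [h, ih, succ_nsmul']

theorem card_bind_of_card_eq_self {s : Multiset ℕ} {t : ℕ → Multiset β}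
    (h : ∀ k ∈ s, card (t k) = k) : card (s.bind t) = s.sum := by
  rw [card_bind, Function.comp_def, map_congr rfl h, map_id']

theorem card_filter_bind_of_card_filter_eq {s : Multiset α} {t : α → Multiset β}
    {p : β → Prop} [DecidablePred p] {m : ℕ} (h : ∀ a ∈ s, card ((t a).filter p) = m) :
    card ((s.bind t).filter p) = m * card s := by
  rw [filter_bind, card_bind, Function.comp_def, map_congr rfl h, map_const', sum_replicate,
    smul_eq_mul, mul_comm]

theorem sum_bind_of_sum_eq_parity_affine {s : Multiset ℕ} {t : ℕ → Multiset ℕ} {α β₀ β₁ : ℤ}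
    (h₀ : ∀ k ∈ s, k % 2 = 0 → ((t k).sum : ℤ) = α * k + β₀)
    (h₁ : ∀ k ∈ s, k % 2 = 1 → ((t k).sum : ℤ) = α * k + β₁) :
    ((s.bind t).sum : ℤ) =
      α * s.sum + β₀ * card s + (β₁ - β₀) * card (s.filter (· % 2 = 1)) := by
  have hsplit : ∀ k ∈ s, ((t k).sum : ℤ) = α * k + β₀ + if k % 2 = 1 then β₁ - β₀ else 0 := by
    intro k hk
    rcases Nat.mod_two_eq_zero_or_one k with hk2 | hk2
    · simp [h₀ k hk hk2, hk2]
    · rw [h₁ k hk hk2, if_pos hk2]; ring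
  rw [sum_bind, Nat.cast_multiset_sum, map_map, Function.comp_def, map_congr rfl hsplit,
    sum_map_add, sum_map_add, sum_map_ite_zero, sum_map_mul_left, map_const', sum_replicate,
    Nat.cast_multiset_sum]
  simp only [nsmul_eq_mul]
  ring

end Multiset

namespace PowerSeries

theorem mul_mk_eq_of_linear_recurrence_three {R : Type*} [CommRing R] {a : ℕ → R} {c₁ c₂ c₃ : R}
    (h : ∀ n, a (n + 3) = c₁ * a (n + 2) + c₂ * a (n + 1) + c₃ * a n) :
    (1 - C c₁ * X - C c₂ * X ^ 2 - C c₃ * X ^ 3) * mk a =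
      C (a 0) + C (a 1 - c₁ * a 0) * X + C (a 2 - c₁ * a 1 - c₂ * a 0) * X ^ 2 := by
  ext n
  rcases n with _ | _ | _ | n <;>
    simp [sub_mul, mul_assoc, coeff_X_pow_mul', coeff_succ_X_mul, coeff_X_pow, h]
  ring

end PowerSeries

theorem forall_mem_levels_of_forall_mem_children {α : Type*} {P : α → Prop}
    {t : α → Multiset α} {levels : ℕ → Multiset α}
    (hlev : ∀ n, levels (n + 1) = (levels n).bind t)
    (h0 : ∀ l ∈ levels 0, P l) (hstep : ∀ k, P k → ∀ l ∈ t k, P l) :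
    ∀ n, ∀ l ∈ levels n, P l := by
  intro n
  induction n with
  | zero => exact h0
  | succ n ih =>
    intro l hl
    rw [hlev, Multiset.mem_bind] at hl
    obtain ⟨k, hk, hlk⟩ := hl
    exact hstep k (ih k hk) l hlk

/-- ECO-system with parity-dependent affine production sums
σ_0(k) = αk + β_0 (k even), σ_1(k) = αk + β_1 (k odd), with exactly m odd labels
produced by every node. Then f_{n+3} = α f_{n+2} + β_0 f_{n+1} + m(β_1 - β_0) f_n,
equivalently (1 - αz - β_0 z² - m(β_1-β_0) z³) F = 1 + (s0-α)z + (s1 - αs0 - β_0)z²,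
where s1 = f 2 is the sum of the labels at level 1. -/
theorem stmt_3 (s0 : ℕ) (hs0 : 1 ≤ s0) (e : ℕ → List ℕ) (α β0 β1 : ℤ) (m : ℕ)
    (hlen : ∀ k, 1 ≤ k → (e k).length = k)
    (hpos : ∀ k, 1 ≤ k → ∀ l ∈ e k, 1 ≤ l)
    (hsum0 : ∀ k, 1 ≤ k → k % 2 = 0 → ((e k).sum : ℤ) = α * k + β0)
    (hsum1 : ∀ k, 1 ≤ k → k % 2 = 1 → ((e k).sum : ℤ) = α * k + β1)
    (hodd : ∀ k, 1 ≤ k → ((e k).filter (fun l => l % 2 = 1)).length = m)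
    (levels : ℕ → Multiset ℕ)
    (hlev0 : levels 0 = {s0})
    (hlev : ∀ n, levels (n + 1) = (levels n).bind (fun k => (e k : Multiset ℕ)))
    (f : ℕ → ℕ) (hf : ∀ n, f n = Multiset.card (levels n)) :
    (∀ n, (f (n + 3) : ℤ) =
      α * f (n + 2) + β0 * f (n + 1) + (m : ℤ) * (β1 - β0) * f n) ∧
    (1 - C (R := ℚ) (α : ℚ) * X - C (R := ℚ) (β0 : ℚ) * X ^ 2
        - C (R := ℚ) ((m : ℚ) * ((β1 : ℚ) - (β0 : ℚ))) * X ^ 3) * mk (fun n => (f n : ℚ))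
      = 1 + C (R := ℚ) ((s0 : ℚ) - (α : ℚ)) * X
          + C (R := ℚ) ((f 2 : ℚ) - (α : ℚ) * (s0 : ℚ) - (β0 : ℚ)) * X ^ 2 := by
  have hpos_lev : ∀ n, ∀ k ∈ levels n, 1 ≤ k :=
    forall_mem_levels_of_forall_mem_children hlev (by simpa [hlev0] using hs0) hpos
  have hf_succ : ∀ n, f (n + 1) = (levels n).sum := fun n => by
    rw [hf, hlev]
    exact Multiset.card_bind_of_card_eq_self fun k hk => hlen k (hpos_lev n k hk)
  have hodd_card :
      ∀ n, Multiset.card ((levels (n + 1)).filter (· % 2 = 1)) = m * f n := fun n => by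
    rw [hf, hlev]
    exact Multiset.card_filter_bind_of_card_filter_eq fun k hk => by
      simpa using hodd k (hpos_lev n k hk)
  have hsum : ∀ n, ((levels (n + 1)).sum : ℤ) = α * (levels n).sum + β0 * f n
      + (β1 - β0) * Multiset.card ((levels n).filter (· % 2 = 1)) := fun n => by
    rw [hf, hlev]
    exact Multiset.sum_bind_of_sum_eq_parity_affine
      (fun k hk => by rw [Multiset.sum_coe]; exact hsum0 k (hpos_lev n k hk))
      (fun k hk => by rw [Multiset.sum_coe]; exact hsum1 k (hpos_lev n k hk))
  have hrec : ∀ n, (f (n + 3) : ℤ) =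
      α * f (n + 2) + β0 * f (n + 1) + (m : ℤ) * (β1 - β0) * f n := fun n => by
    rw [hf_succ, hsum, hodd_card, ← hf_succ]
    push_cast
    ring
  refine ⟨hrec, ?_⟩
  have hf0 : f 0 = 1 := by rw [hf, hlev0, Multiset.card_singleton]
  have hf1 : f 1 = s0 := by rw [hf_succ, hlev0, Multiset.sum_singleton]
  rw [PowerSeries.mul_mk_eq_of_linear_recurrence_three fun n => by exact_mod_cast hrec n]
  simp [hf0, hf1]
end

section
/- The number of walks of length n on the nonnegative integers starting at 0, where from position k the allowed steps are to any of 0,1,...,k-1 or to k+1 (Motzkin walks via factorial rule), equals the Motzkin number M_n, whose generating function satisfies F = 1 + zF + z²F² , i.e. F(z) = (1 - z - √(1-2z-3z²))/(2z²). -/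
/-!
Write `C_k = ∑ₙ c n k zⁿ` for the generating function of walks ending at `k`. The step rule
reads `C_k = [k = 0] + z C_{k-1} + z ∑_{j > k} C_j`, and it is solved by geometric columns
`C_k = R (zR)^k` where `R = 1 / (1 - z² M)` and `M` is the Motzkin series: the Motzkin equation
gives `M (1 - zR) = R`, so the tail `∑_{j > k} C_j` sums to `M (zR)^{k+1}`. Since the step rule
determines the walk counts row by row, `c n k` is the `n`-th coefficient of `R (zR)^k`.
Finally, from every position one may step to `0`, so `f n = c n 0 + c (n + 1) 0`, that is
`z F = (1 + z) R - 1 = z M`.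
-/

open PowerSeries Finset

section WalkStep

variable {α : Type*} [AddCommMonoid α]

def WalkStep (c : ℕ → ℕ → α) : Prop :=
  ∀ n k, c (n + 1) k = (if 1 ≤ k then c n (k - 1) else 0) + ∑ j ∈ Ioc k n, c n j

theorem WalkStep.unique {c d : ℕ → ℕ → α} (hc : WalkStep c) (hd : WalkStep d)
    (h0 : c 0 = d 0) : c = d := by
  funext n
  induction n with
  | zero => exact h0
  | succ n ih => funext k; rw [hc, hd, ih]

theorem WalkStep.sum_range {c : ℕ → ℕ → α} (hc : WalkStep c) (n : ℕ) :
    ∑ k ∈ range (n + 1), c n k = c n 0 + c (n + 1) 0 := by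
  rw [hc, Nat.range_succ_eq_Icc_zero, ← add_sum_Ioc_eq_sum_Icc (Nat.zero_le n)]
  simp

end WalkStep

def motzkin : ℕ → ℕ
  | 0 => 1
  | n + 1 => motzkin n + ∑ i : Fin n, motzkin i * motzkin (n - 1 - i)

noncomputable def motzkinSeries : ℚ⟦X⟧ := mk fun n => (motzkin n : ℚ)

theorem motzkinSeries_eq :
    motzkinSeries = 1 + X * motzkinSeries + X ^ 2 * motzkinSeries ^ 2 := by
  ext (_ | _ | n)
  · simp [motzkinSeries, motzkin]
  · simp [motzkinSeries, motzkin, coeff_X_pow_mul']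
  · rw [motzkinSeries, coeff_mk, motzkin, map_add, map_add, coeff_succ_X_mul, coeff_mk, pow_two X,
      mul_assoc, coeff_succ_X_mul, coeff_succ_X_mul, pow_two, coeff_mul,
      Nat.sum_antidiagonal_eq_sum_range_succ_mk, sum_range]
    simp [motzkin]

noncomputable def excursionSeries : ℚ⟦X⟧ := (1 - X ^ 2 * motzkinSeries)⁻¹

local notation "M" => motzkinSeries
local notation "R" => excursionSeries

theorem excursionSeries_eq : R = 1 + X * (M * (X * R)) := by
  have h : (1 - X ^ 2 * M) * R = 1 := PowerSeries.mul_inv_cancel _ (by simp)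
  linear_combination h

theorem motzkinSeries_mul_one_sub : M * (1 - X * R) = R := by
  linear_combination -M * excursionSeries_eq + R * motzkinSeries_eq

theorem one_add_X_mul_motzkinSeries : 1 + X * M = (1 + X) * R := by
  linear_combination -excursionSeries_eq + X * motzkinSeries_mul_one_sub

theorem excursionSeries_mul_pow_succ (k : ℕ) :
    R * (X * R) ^ (k + 1) = X * (R * (X * R) ^ k + M * (X * R) ^ (k + 2)) := by
  linear_combination (X * R) ^ k * X * R * excursionSeries_eq

theorem coeff_mul_X_mul_pow_of_lt {S : Type*} [CommSemiring S] (A B : S⟦X⟧) {n j : ℕ}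
    (h : n < j) : coeff n (A * (X * B) ^ j) = 0 := by
  rw [mul_pow, mul_left_comm, coeff_X_pow_mul', if_neg (by omega)]

noncomputable def columnCoeff (n k : ℕ) : ℚ := coeff n (R * (X * R) ^ k)

theorem columnCoeff_zero (k : ℕ) : columnCoeff 0 k = if k = 0 then 1 else 0 := by
  rcases k with _ | k
  · rw [columnCoeff, pow_zero, mul_one, excursionSeries_eq]
    simp
  · simp [columnCoeff, pow_succ]

theorem sum_Ioc_columnCoeff (n k : ℕ) :
    ∑ j ∈ Ioc k n, columnCoeff n j = coeff n (M * (X * R) ^ (k + 1)) := by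
  -- Widening the range past `n` adds only zero terms and makes it nonempty for every `k`.
  have hsub : Ioc k n ⊆ Ico (k + 1) (k + n + 1) := by
    intro j; simp only [mem_Ioc, mem_Ico]; omega
  unfold columnCoeff
  rw [sum_subset hsub fun j hj hj' => coeff_mul_X_mul_pow_of_lt _ _ (by simp at hj hj'; omega)]
  have hgeom : R * ∑ j ∈ Ico (k + 1) (k + n + 1), (X * R) ^ j =
      M * (X * R) ^ (k + 1) - M * (X * R) ^ (k + n + 1) := by
    nth_rw 1 [← motzkinSeries_mul_one_sub]
    rw [mul_assoc, mul_comm (1 - _), geom_sum_Ico_mul_neg _ (by omega), mul_sub]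
  simp only [← map_sum, ← mul_sum, hgeom, map_sub,
    coeff_mul_X_mul_pow_of_lt M R (by omega : n < k + n + 1), sub_zero]

theorem walkStep_columnCoeff : WalkStep columnCoeff := by
  intro n k
  rw [sum_Ioc_columnCoeff]
  rcases k with _ | k
  · rw [columnCoeff, pow_zero, mul_one]
    nth_rw 1 [excursionSeries_eq]
    simp
  · rw [columnCoeff, excursionSeries_mul_pow_succ, coeff_succ_X_mul, map_add]
    simp [columnCoeff]

theorem motzkin_eq_columnCoeff (n : ℕ) :
    (motzkin n : ℚ) = columnCoeff n 0 + columnCoeff (n + 1) 0 := by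
  have h := congrArg (coeff (n + 1)) one_add_X_mul_motzkinSeries
  rw [add_comm]
  simpa [columnCoeff, motzkinSeries, add_mul, coeff_one] using h

theorem stmt_5_general (c : ℕ → ℕ → ℕ)
    (h0 : ∀ k, c 0 k = if k = 0 then 1 else 0)
    (hstep : ∀ n k, c (n + 1) k =
      (if 1 ≤ k then c n (k - 1) else 0) + ∑ j ∈ Finset.Ioc k n, c n j)
    (f : ℕ → ℕ) (hf : ∀ n, f n = ∑ k ∈ Finset.range (n + 1), c n k)
    (F : PowerSeries ℚ) (hF : F = mk fun n => (f n : ℚ)) :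
    F = 1 + X * F + X ^ 2 * F ^ 2 := by
  have hwalk : WalkStep fun n k => (c n k : ℚ) := fun n k => by
    beta_reduce
    exact_mod_cast hstep n k
  have hc : (fun n k => (c n k : ℚ)) = columnCoeff :=
    hwalk.unique walkStep_columnCoeff (funext fun k => by simp [h0, columnCoeff_zero])
  have hFM : F = motzkinSeries := by
    ext n
    rw [hF, coeff_mk, hf, motzkinSeries, coeff_mk, motzkin_eq_columnCoeff, ← hc]
    push_cast
    exact hwalk.sum_range n
  rw [hFM]
  exact motzkinSeries_eq

/-- walks on ℕ starting at 0 where from position k one may step to any of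
0,...,k-1 or to k+1. Here c n k is the number of such walks of length n ending at k,
and f n the total number of walks of length n. The generating function F = ∑ f_n z^n
satisfies F = 1 + zF + z²F², i.e. f_n is the Motzkin number M_n. -/
theorem stmt_5 (c : ℕ → ℕ → ℕ)
    (h0 : ∀ k, c 0 k = if k = 0 then 1 else 0)
    (hbound : ∀ n k, n < k → c n k = 0)
    (hstep : ∀ n k, c (n + 1) k =
      (if 1 ≤ k then c n (k - 1) else 0) + ∑ j ∈ Finset.Ioc k n, c n j)
    (f : ℕ → ℕ) (hf : ∀ n, f n = ∑ k ∈ Finset.range (n + 1), c n k)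
    (F : PowerSeries ℚ) (hF : F = mk fun n => (f n : ℚ)) :
    F = 1 + X * F + X ^ 2 * F ^ 2 :=
  stmt_5_general c h0 hstep f hf F hF
end

section
/- The number of walks of length n on the nonnegative integers starting at 0, where from position k the allowed steps are to any of 0,1,...,k-1, to k, or to k+1 with multiplicity 2 (i.e., two distinguishable steps to k+1), equals the large Schröder number, with generating function F(z) = (1 - 3z - √(1 - 6z + z²))/(4z²). -/
/-!
Let `A = ∑ₙ c n 0 Xⁿ` count the walks ending at `0`. Cutting a walk that ends at `k` at its last
departures from the levels `0, …, k - 1` (each by one of the two up-steps), and noting that above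
a level the walk is a shifted copy of the original one, gives `∑ₙ c n k Xⁿ = (2X)ᵏ A^(k+1)`.
Since `c (n + 1) 0 = ∑ⱼ c n j`, this forces the kernel equation `(1 + X) A - 2X A² = 1`. The two
facts are proved together by induction on `n`, working modulo `X^(n+1)`. Finally `A = 1 + X F`,
and `S = 1 + X - 4X A` satisfies `S² = (1 + X)² - 8X = 1 - 6X + X²`.
-/

open PowerSeries Finset

theorem dvd_geom_sum_Ico_mul_one_sub_sub {R : Type*} [CommRing R] {x b : R} (hb : x ∣ b)
    (k n : ℕ) : x ^ n ∣ (∑ j ∈ Ico k n, b ^ j) * (1 - b) - b ^ k := by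
  rcases le_or_gt k n with hkn | hnk
  · rw [geom_sum_Ico_mul_neg b hkn, sub_sub_cancel_left, dvd_neg]
    exact pow_dvd_pow_of_dvd hb n
  · rw [Ico_eq_empty_of_le hnk.le, sum_empty, zero_mul, zero_sub, dvd_neg]
    exact (pow_dvd_pow x hnk.le).trans (pow_dvd_pow_of_dvd hb k)

namespace PowerSeries

variable {R : Type*} [Ring R] {n : ℕ} {p q : R⟦X⟧}

theorem coeff_eq_zero_of_X_pow_succ_dvd (h : X ^ (n + 1) ∣ p) : coeff n p = 0 :=
  X_pow_dvd_iff.mp h n n.lt_succ_self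

theorem coeff_eq_of_X_pow_succ_dvd_sub (h : X ^ (n + 1) ∣ p - q) : coeff n p = coeff n q := by
  rw [← sub_eq_zero, ← map_sub]
  exact coeff_eq_zero_of_X_pow_succ_dvd h

theorem X_pow_dvd_mul_inv_one_sub_sub_add_sum_Ioc {K : Type*} [Field K] {A B : K⟦X⟧}
    (hB : X ∣ B) (k n : ℕ) :
    X ^ (n + 1) ∣ A * B ^ k * (1 - B)⁻¹ - (A * B ^ k + ∑ j ∈ Ioc k n, A * B ^ j) := by
  have hu : (1 - B) * (1 - B)⁻¹ = 1 :=
    PowerSeries.mul_inv_cancel _ (by simp [X_dvd_iff.mp hB])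
  have hgeom := dvd_geom_sum_Ico_mul_one_sub_sub hB (k + 1) (n + 1)
  rw [Ico_add_one_add_one_eq_Ioc] at hgeom
  convert hgeom.mul_left (-(A * (1 - B)⁻¹)) using 1
  rw [← mul_sum]
  linear_combination (A * B ^ k + A * ∑ j ∈ Ioc k n, B ^ j) * hu

end PowerSeries

namespace SchroderWalk

variable {c : ℕ → ℕ → ℕ} {A : ℚ⟦X⟧} {n : ℕ}

theorem one_sub_two_X_mul_mul_inv (A : ℚ⟦X⟧) : (1 - 2 * X * A) * (1 - 2 * X * A)⁻¹ = 1 :=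
  PowerSeries.mul_inv_cancel _ (by simp)

theorem cast_add_sum_Ioc_eq_coeff (hP : ∀ j, (c n j : ℚ) = coeff n (A * (2 * X * A) ^ j))
    (k : ℕ) : (c n k : ℚ) + ∑ j ∈ Ioc k n, (c n j : ℚ) =
      coeff n (A * (2 * X * A) ^ k * (1 - 2 * X * A)⁻¹) := by
  simp only [hP, ← map_sum, ← map_add]
  exact (coeff_eq_of_X_pow_succ_dvd_sub
    (X_pow_dvd_mul_inv_one_sub_sub_add_sum_Ioc (dvd_mul_of_dvd_left (dvd_mul_left X 2) A) k n)).symm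

theorem coeff_succ_kernel_eq_zero (hA : ∀ m, coeff m A = c m 0)
    (hc0 : c (n + 1) 0 = c n 0 + ∑ j ∈ Ioc 0 n, c n j)
    (hP : ∀ j, (c n j : ℚ) = coeff n (A * (2 * X * A) ^ j))
    (hD : X ^ (n + 1) ∣ (1 + X) * A - 2 * X * A ^ 2 - 1) :
    coeff (n + 1) ((1 + X) * A - 2 * X * A ^ 2 - 1) = 0 := by
  have hcoeff : coeff (n + 1) ((1 + X) * A - 2 * X * A ^ 2 - 1) =
      coeff n (A * (1 - 2 * X * A)⁻¹ + A - 2 * A ^ 2) := by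
    have := cast_add_sum_Ioc_eq_coeff hP 0
    rw [pow_zero, mul_one] at this
    rw [show (1 + X) * A - 2 * X * A ^ 2 - 1 = A - 1 + X * (A - 2 * A ^ 2) by ring,
      map_add, coeff_succ_X_mul, map_sub, coeff_one, if_neg n.succ_ne_zero, hA, hc0]
    push_cast
    rw [this, sub_zero, ← map_add, add_sub_assoc]
  rw [hcoeff, show A * (1 - 2 * X * A)⁻¹ + A - 2 * A ^ 2 =
      -(2 * A * (1 - 2 * X * A)⁻¹) * ((1 + X) * A - 2 * X * A ^ 2 - 1) by
    linear_combination (2 * A ^ 2 - A) * one_sub_two_X_mul_mul_inv A]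
  exact coeff_eq_zero_of_X_pow_succ_dvd (hD.mul_left _)

theorem cast_succ_succ_eq_coeff (k : ℕ)
    (hck : c (n + 1) (k + 1) = 2 * c n k + c n (k + 1) + ∑ j ∈ Ioc (k + 1) n, c n j)
    (hP : ∀ j, (c n j : ℚ) = coeff n (A * (2 * X * A) ^ j))
    (hD : X ^ (n + 1) ∣ (1 + X) * A - 2 * X * A ^ 2 - 1) :
    (c (n + 1) (k + 1) : ℚ) = coeff (n + 1) (A * (2 * X * A) ^ (k + 1)) := by
  have hsplit : 2 * A ^ 2 * (2 * X * A) ^ k = 2 * (A * (2 * X * A) ^ k) +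
      A * (2 * X * A) ^ (k + 1) * (1 - 2 * X * A)⁻¹ +
      2 * A * (2 * X * A) ^ k * (1 - 2 * X * A)⁻¹ * ((1 + X) * A - 2 * X * A ^ 2 - 1) := by
    linear_combination (2 * A * (2 * X * A) ^ k - 2 * A ^ 2 * (2 * X * A) ^ k) *
      one_sub_two_X_mul_mul_inv A
  rw [hck, show A * (2 * X * A) ^ (k + 1) = X * (2 * A ^ 2 * (2 * X * A) ^ k) by ring,
    coeff_succ_X_mul, hsplit, map_add, coeff_eq_zero_of_X_pow_succ_dvd (hD.mul_left _), add_zero,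
    map_add, ← cast_add_sum_Ioc_eq_coeff hP, two_mul (A * _), map_add, ← hP]
  push_cast
  ring

theorem walk_count_eq_coeff_and_X_pow_dvd_kernel (h0 : ∀ k, c 0 k = if k = 0 then 1 else 0)
    (hstep : ∀ n k, c (n + 1) k =
      (if 1 ≤ k then 2 * c n (k - 1) else 0) + c n k + ∑ j ∈ Ioc k n, c n j)
    (hA : ∀ m, coeff m A = c m 0) (n : ℕ) :
    (∀ k, (c n k : ℚ) = coeff n (A * (2 * X * A) ^ k)) ∧
      X ^ (n + 1) ∣ (1 + X) * A - 2 * X * A ^ 2 - 1 := by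
  induction n with
  | zero =>
    refine ⟨fun k => ?_, ?_⟩
    · cases k <;> simp [h0, hA]
    · have hA0 : constantCoeff A = 1 := by
        rw [← coeff_zero_eq_constantCoeff_apply, hA, h0, if_pos rfl, Nat.cast_one]
      rw [zero_add, pow_one, X_dvd_iff]
      simp [hA0]
  | succ n ih =>
    obtain ⟨hP, hD⟩ := ih
    have hc0 : c (n + 1) 0 = c n 0 + ∑ j ∈ Ioc 0 n, c n j := by simpa using hstep n 0
    refine ⟨fun k => ?_, X_pow_dvd_iff.mpr fun m hm => ?_⟩
    · cases k with
      | zero => simp [hA]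
      | succ k => exact cast_succ_succ_eq_coeff k (by simpa using hstep n (k + 1)) hP hD
    · rcases Nat.lt_succ_iff_lt_or_eq.mp hm with hm | rfl
      · exact X_pow_dvd_iff.mp hD m hm
      · exact coeff_succ_kernel_eq_zero hA hc0 hP hD

end SchroderWalk

theorem stmt_6_general (c : ℕ → ℕ → ℕ)
    (h0 : ∀ k, c 0 k = if k = 0 then 1 else 0)
    (hstep : ∀ n k, c (n + 1) k =
      (if 1 ≤ k then 2 * c n (k - 1) else 0) + c n k + ∑ j ∈ Finset.Ioc k n, c n j)
    (f : ℕ → ℕ) (hf : ∀ n, f n = ∑ k ∈ Finset.range (n + 1), c n k)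
    (F : PowerSeries ℚ) (hF : F = mk fun n => (f n : ℚ)) :
    ∃ S : PowerSeries ℚ, S ^ 2 = 1 - 6 * X + X ^ 2 ∧ constantCoeff (R := ℚ) S = 1 ∧
      4 * X ^ 2 * F = 1 - 3 * X - S := by
  set A : ℚ⟦X⟧ := mk fun n => (c n 0 : ℚ) with hA
  have hkernel : (1 + X) * A - 2 * X * A ^ 2 = 1 := by
    rw [← sub_eq_zero]
    ext n
    exact coeff_eq_zero_of_X_pow_succ_dvd
      (SchroderWalk.walk_count_eq_coeff_and_X_pow_dvd_kernel h0 hstep (fun m => coeff_mk _ _) n).2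
  have hAF : A = 1 + X * F := by
    ext n
    cases n with
    | zero => simp [hA, h0]
    | succ n =>
      rw [hA, coeff_mk, map_add, coeff_succ_X_mul, hF, coeff_mk, coeff_one, if_neg n.succ_ne_zero,
        zero_add, hf, hstep, sum_range_eq_add_Ico _ n.succ_pos]
      simp [← Ico_add_one_add_one_eq_Ioc]
  refine ⟨1 + X - 4 * X * A, ?_, by simp [hA, h0], ?_⟩
  · linear_combination (-8 * X) * hkernel
  · linear_combination (-4 * X) * hAF

/-- walks on ℕ starting at 0 where from position k one may step to any of
0,...,k-1, stay at k, or take one of two distinguishable steps to k+1. The number f n of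
such walks of length n is the large Schröder number:
F(z) = (1 - 3z - √(1 - 6z + z²))/(4z²). -/
theorem stmt_6 (c : ℕ → ℕ → ℕ)
    (h0 : ∀ k, c 0 k = if k = 0 then 1 else 0)
    (hbound : ∀ n k, n < k → c n k = 0)
    (hstep : ∀ n k, c (n + 1) k =
      (if 1 ≤ k then 2 * c n (k - 1) else 0) + c n k + ∑ j ∈ Finset.Ioc k n, c n j)
    (f : ℕ → ℕ) (hf : ∀ n, f n = ∑ k ∈ Finset.range (n + 1), c n k)
    (F : PowerSeries ℚ) (hF : F = mk fun n => (f n : ℚ)) :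
    ∃ S : PowerSeries ℚ, S ^ 2 = 1 - 6 * X + X ^ 2 ∧ constantCoeff (R := ℚ) S = 1 ∧
      4 * X ^ 2 * F = 1 - 3 * X - S :=
  stmt_6_general c h0 hstep f hf F hF
end

section
/- For the walk on ℕ starting at 0 with rule (k) ↝ (0)(1)...(k-2)(k+1) (all backward/stay moves to positions ≤ k-2 plus a forward jump to k+1; moves to k-1 and k forbidden), the generating function G = zF(z,1) of walks counted by length (shifted) satisfies the algebraic equation G(1+G) = z(1 + 2G + G² + G³). -/
/-!
Let `A k` be the series of walks ending at `k` and `T a = ∑_{j ≥ a} A j`. Cut a walk ending at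
`k + 1` at its last step from `k` to `k + 1` (the only way to enter `[k + 1, ∞)` from below): the
rest is a walk from `k + 1` back to `k + 1` staying in `[k + 1, ∞)`, and by translation invariance
of the rule these are counted by `A 0`. Hence `A (k + 1) = z A k A 0`, so `T (j + 1) = z A 0 T j`.
Writing `C = A 0` and `F = T 0`, this gives `F = C + z C F` and, since a step to `0` comes from a
position `≥ 2`, `C = 1 + z T 2 = 1 + z³ C² F`; eliminating `C` yields the equation for
`G = z F`.

Formally, the step recurrence determines coefficient `n + 1` from coefficient `n`, so the identity
`A (k + 1) = z A k A 0` is proved modulo `z ^ m` by induction on `m`, computing in the quotient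
ring `R⟦X⟧ ⧸ (X ^ m)`, in which `T a` vanishes for `a ≥ m`.
-/

open PowerSeries

theorem succ_eq_mul_of_eq_add_succ {S : Type*} [Semiring S] {a t : ℕ → S} {u : S} {N : ℕ}
    (ht : ∀ j, t j = a j + t (j + 1)) (ha : ∀ j, a (j + 1) = u * a j)
    (hN : ∀ j, N ≤ j → t j = 0) (j : ℕ) : t (j + 1) = u * t j := by
  obtain ⟨d, hd⟩ : ∃ d, N ≤ j + d := ⟨N, by omega⟩
  induction d generalizing j with
  | zero => rw [hN j hd, hN (j + 1) (by omega), mul_zero]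
  | succ d ih =>
    calc t (j + 1) = a (j + 1) + t (j + 1 + 1) := ht _
      _ = u * a j + u * t (j + 1) := by rw [ha, ih (j + 1) (by omega)]
      _ = u * t j := by rw [ht j, mul_add]

theorem eq_pow_mul_of_succ_eq_mul {S : Type*} [Monoid S] {t : ℕ → S} {u : S}
    (h : ∀ j, t (j + 1) = u * t j) (j : ℕ) : t j = u ^ j * t 0 := by
  induction j with
  | zero => rw [pow_zero, one_mul]
  | succ j ih => rw [h, ih, pow_succ', mul_assoc]

theorem PowerSeries.eq_zero_of_forall_X_pow_dvd {R : Type*} [Semiring R] {φ : R⟦X⟧}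
    (h : ∀ m, X ^ m ∣ φ) : φ = 0 :=
  ext fun n => X_pow_dvd_iff.mp (h (n + 1)) n n.lt_succ_self

section TailRecurrence

variable {R : Type*} [CommRing R] {A T : ℕ → R⟦X⟧}

theorem X_pow_dvd_tail_succ_sub_of_dvd (hT : ∀ a, T a = A a + T (a + 1))
    (hdvd : ∀ a, X ^ a ∣ T a) {m : ℕ} (hA : ∀ k, X ^ m ∣ A (k + 1) - X * A k * A 0)
    (j : ℕ) :
    X ^ m ∣ T (j + 1) - X * A 0 * T j := by
  set π := Ideal.Quotient.mk (Ideal.span {(X : R⟦X⟧) ^ m})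
  rw [← Ideal.mem_span_singleton, ← Ideal.Quotient.eq, map_mul]
  refine succ_eq_mul_of_eq_add_succ (a := fun k => π (A k)) (t := fun k => π (T k)) (N := m)
    (fun k => by simp only [hT k, map_add]) (fun k => ?_) (fun k hk => ?_) j
  · rw [← map_mul, Ideal.Quotient.eq, Ideal.mem_span_singleton, mul_right_comm]
    exact hA k
  · exact (Ideal.Quotient.eq_zero_iff_dvd _ _).mpr ((pow_dvd_pow X hk).trans (hdvd k))

theorem X_pow_dvd_succ_sub_mul (hT : ∀ a, T a = A a + T (a + 1)) (hdvd : ∀ a, X ^ a ∣ T a)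
    (hA0 : A 0 = 1 + X * T 2) (hA : ∀ k, A (k + 1) = X * A k + X * T (k + 3)) (m k : ℕ) :
    X ^ m ∣ A (k + 1) - X * A k * A 0 := by
  induction m generalizing k with
  | zero => simp
  | succ m ih =>
    have hsplit : A (k + 1) - X * A k * A 0 = X * (T (k + 3) - X * A k * T 2) := by
      rw [hA, hA0]; ring
    rw [hsplit, pow_succ']
    refine mul_dvd_mul_left X ?_
    set π := Ideal.Quotient.mk (Ideal.span {(X : R⟦X⟧) ^ m})
    have hAπ : ∀ j, π (A (j + 1)) = π (X * A 0) * π (A j) := fun j => by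
      rw [← map_mul, Ideal.Quotient.eq, Ideal.mem_span_singleton, mul_right_comm]
      exact ih j
    have hTπ : ∀ j, π (T (j + 1)) = π (X * A 0) * π (T j) := fun j => by
      rw [← map_mul, Ideal.Quotient.eq, Ideal.mem_span_singleton]
      exact X_pow_dvd_tail_succ_sub_of_dvd hT hdvd ih j
    have hAk := eq_pow_mul_of_succ_eq_mul (t := fun j => π (A j)) hAπ k
    have hTk := eq_pow_mul_of_succ_eq_mul (t := fun j => π (T j)) hTπ (k + 3)
    have hT2 := eq_pow_mul_of_succ_eq_mul (t := fun j => π (T j)) hTπ 2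
    rw [← Ideal.mem_span_singleton, ← Ideal.Quotient.eq, map_mul, map_mul, hAk, hTk, hT2]
    simp only [map_mul]
    ring

theorem tail_succ_eq_X_mul_mul (hT : ∀ a, T a = A a + T (a + 1)) (hdvd : ∀ a, X ^ a ∣ T a)
    (hA0 : A 0 = 1 + X * T 2) (hA : ∀ k, A (k + 1) = X * A k + X * T (k + 3)) (j : ℕ) :
    T (j + 1) = X * A 0 * T j :=
  sub_eq_zero.mp <| eq_zero_of_forall_X_pow_dvd fun m =>
    X_pow_dvd_tail_succ_sub_of_dvd hT hdvd (X_pow_dvd_succ_sub_mul hT hdvd hA0 hA m) j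

end TailRecurrence

section Walks

open Finset

structure IsWalkCount (c : ℕ → ℕ → ℕ) : Prop where
  zero : ∀ k, c 0 k = if k = 0 then 1 else 0
  succ : ∀ n k, c (n + 1) k =
    (if 1 ≤ k then c n (k - 1) else 0) + ∑ j ∈ Icc (k + 2) n, c n j

variable (R : Type*) [CommRing R] (c : ℕ → ℕ → ℕ)

noncomputable def endGF (k : ℕ) : R⟦X⟧ := mk fun n => (c n k : R)

noncomputable def tailGF (a : ℕ) : R⟦X⟧ := mk fun n => ∑ j ∈ Icc a n, (c n j : R)

variable {R c}

namespace IsWalkCount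

theorem eq_zero_of_lt (hc : IsWalkCount c) {n k : ℕ} (h : n < k) : c n k = 0 := by
  induction n generalizing k with
  | zero => simp [hc.zero, h.ne']
  | succ n ih =>
    rw [hc.succ, if_pos (by omega), ih (by omega), Icc_eq_empty (by omega), sum_empty, add_zero]

theorem tailGF_eq_endGF_add (hc : IsWalkCount c) (a : ℕ) :
    tailGF R c a = endGF R c a + tailGF R c (a + 1) := by
  ext n
  simp only [tailGF, endGF, map_add, coeff_mk]
  by_cases h : a ≤ n
  · rw [Icc_eq_cons_Ioc h, sum_cons, Icc_add_one_left_eq_Ioc]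
  · rw [Icc_eq_empty h, Icc_eq_empty (by omega), hc.eq_zero_of_lt (by omega)]
    simp

theorem endGF_zero (hc : IsWalkCount c) : endGF R c 0 = 1 + X * tailGF R c 2 := by
  ext n
  cases n with
  | zero => simp [endGF, hc.zero]
  | succ m => simp [endGF, tailGF, coeff_one, hc.succ m 0]

theorem endGF_succ (hc : IsWalkCount c) (k : ℕ) :
    endGF R c (k + 1) = X * endGF R c k + X * tailGF R c (k + 3) := by
  ext n
  cases n with
  | zero => simp [endGF, hc.zero]
  | succ m => simp [endGF, tailGF, hc.succ m (k + 1)]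

end IsWalkCount

theorem X_pow_dvd_tailGF (a : ℕ) : X ^ a ∣ tailGF R c a :=
  X_pow_dvd_iff.mpr fun m hm => by rw [tailGF, coeff_mk, Icc_eq_empty (by omega), sum_empty]

theorem IsWalkCount.tailGF_succ (hc : IsWalkCount c) (j : ℕ) :
    tailGF R c (j + 1) = X * endGF R c 0 * tailGF R c j :=
  tail_succ_eq_X_mul_mul hc.tailGF_eq_endGF_add X_pow_dvd_tailGF hc.endGF_zero hc.endGF_succ j

end Walks

theorem stmt_12_general (c : ℕ → ℕ → ℕ)
    (h0 : ∀ k, c 0 k = if k = 0 then 1 else 0)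
    (hstep : ∀ n k, c (n + 1) k =
      (if 1 ≤ k then c n (k - 1) else 0) + ∑ j ∈ Finset.Icc (k + 2) n, c n j)
    (f : ℕ → ℕ) (hf : ∀ n, f n = ∑ k ∈ Finset.range (n + 1), c n k)
    (G : PowerSeries ℚ) (hG : G = X * mk fun n => (f n : ℚ)) :
    G * (1 + G) = X * (1 + 2 * G + G ^ 2 + G ^ 3) := by
  have hc : IsWalkCount c := ⟨h0, hstep⟩
  have hF : (mk fun n => (f n : ℚ)) = tailGF ℚ c 0 := by
    ext n
    rw [coeff_mk, tailGF, coeff_mk, hf, Nat.range_succ_eq_Icc_zero, Nat.cast_sum]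
  have hFC : tailGF ℚ c 0 = endGF ℚ c 0 + X * endGF ℚ c 0 * tailGF ℚ c 0 := by
    conv_lhs => rw [hc.tailGF_eq_endGF_add, hc.tailGF_succ]
  have hCF : endGF ℚ c 0 = 1 + X ^ 3 * endGF ℚ c 0 ^ 2 * tailGF ℚ c 0 := by
    conv_lhs => rw [hc.endGF_zero, hc.tailGF_succ, hc.tailGF_succ]
    ring
  rw [hG, hF]
  -- substitute `C = F / (1 + X * F)` from `hFC` into `hCF`
  generalize endGF ℚ c 0 = C at hFC hCF
  generalize tailGF ℚ c 0 = F at hFC hCF ⊢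
  linear_combination X * (1 + X * F) ^ 2 * hCF
    + (X * (1 + X * F) - X ^ 4 * F * (C * (1 + X * F) + F)) * hFC

/-- walks on ℕ starting at 0 with rule (k) ↝ (0)(1)...(k-2)(k+1)
(moves to any position ≤ k-2, or to k+1). With f n the number of such walks of
length n and G = z·∑ f_n z^n, one has G(1+G) = z(1 + 2G + G² + G³). -/
theorem stmt_12 (c : ℕ → ℕ → ℕ)
    (h0 : ∀ k, c 0 k = if k = 0 then 1 else 0)
    (hbound : ∀ n k, n < k → c n k = 0)
    (hstep : ∀ n k, c (n + 1) k =
      (if 1 ≤ k then c n (k - 1) else 0) + ∑ j ∈ Finset.Icc (k + 2) n, c n j)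
    (f : ℕ → ℕ) (hf : ∀ n, f n = ∑ k ∈ Finset.range (n + 1), c n k)
    (G : PowerSeries ℚ) (hG : G = X * mk fun n => (f n : ℚ)) :
    G * (1 + G) = X * (1 + 2 * G + G ^ 2 + G ^ 3) :=
  stmt_12_general c h0 hstep f hf G hG
end

section
/- For the walk on ℕ starting at 0 with rule (k) ↝ (0)(2)(3)...(k-1)(k+1) (move to any position in [0,k-1] except 1, or to k+1), the generating function of all walks by length is F(z,1) = (3 - 3z² - 2z³ - (1+z)√(1-2z-3z²)) / (2(1 - z - z² + z³ + z⁴)), with expansion 1 + z + 2z² + 3z³ + 6z⁴ + 12z⁵ + O(z⁶). -/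
/-!
Write `C_k(z)` for the generating function of walks ending at `k`, and let `V` be the root of
`(1 + z) V² = (1 + z) V - z` with `V(0) = 0`, namely `V = u C(u)` for the Catalan series `C` and
`u = z / (1 + z)`. With `T = z / (1 - V - z²)`, the series `C_0 = 1 + z T` and
`C_k = (1 - V) V^(k-1) T` (`k ≥ 1`) satisfy the recurrences, because the tails `∑_{j > a} C_j`
telescope to `V^a T`. Hence `F = 1 + (1 + z) T`, and `√(1 - 2z - 3z²) = (1 + z)(1 - 2V)`.
The recurrences determine the counts, so the first terms are computed from an explicit solution.
-/

open PowerSeries Finset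

theorem exists_sq_mul_add_one_eq {K : Type*} [Field K] (u : K⟦X⟧) (hu : constantCoeff u = 0) :
    ∃ Q : K⟦X⟧, Q ^ 2 * u + 1 = Q := by
  have ha : HasSubst u := HasSubst.of_constantCoeff_zero' hu
  refine ⟨subst u (catalanSeries.map (Nat.castRingHom K)), ?_⟩
  have h := congrArg (fun f => subst u (f.map (Nat.castRingHom K))) catalanSeries_sq_mul_X_add_one
  simpa only [map_add, map_mul, map_pow, map_X, map_one, ← coe_substAlgHom ha, substAlgHom_X] using h

theorem exists_walkRoot (K : Type*) [Field K] :
    ∃ V : K⟦X⟧, X ∣ V ∧ (1 + X) * V ^ 2 = (1 + X) * V - X := by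
  have hunit : (1 + X : K⟦X⟧) * (1 + X)⁻¹ = 1 := PowerSeries.mul_inv_cancel _ (by simp)
  obtain ⟨Q, hQ⟩ := exists_sq_mul_add_one_eq (X * (1 + X)⁻¹ : K⟦X⟧) (by simp)
  refine ⟨X * ((1 + X)⁻¹ * Q), dvd_mul_right _ _, ?_⟩
  linear_combination X * hQ + (X ^ 2 * (1 + X)⁻¹ * Q ^ 2 - X * Q) * hunit

/-- The recurrences satisfied by `c n k`, the number of walks of length `n` from `0` to `k`. -/
structure IsWalkCount_s13 {R : Type*} [AddCommMonoidWithOne R] (c : ℕ → ℕ → R) : Prop where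
  start : ∀ k, c 0 k = if k = 0 then 1 else 0
  step_zero : ∀ n, c (n + 1) 0 = ∑ j ∈ Icc 1 n, c n j
  step_one : ∀ n, c (n + 1) 1 = c n 0
  step : ∀ n k, 2 ≤ k → c (n + 1) k = c n (k - 1) + ∑ j ∈ Icc (k + 1) n, c n j

namespace IsWalkCount_s13

variable {R : Type*} [AddCommMonoidWithOne R] {c d : ℕ → ℕ → R}

theorem unique (hc : IsWalkCount_s13 c) (hd : IsWalkCount_s13 d) : c = d := by
  funext n
  induction n with
  | zero => funext k; rw [hc.start, hd.start]
  | succ n ih =>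
    funext k
    rcases k with _ | _ | k
    · rw [hc.step_zero, hd.step_zero, ih]
    · rw [hc.step_one, hd.step_one, ih]
    · rw [hc.step _ _ (by omega), hd.step _ _ (by omega), ih]

theorem natCast {w : ℕ → ℕ → ℕ} (hw : IsWalkCount_s13 w) : IsWalkCount_s13 fun n k => (w n k : R) where
  start k := by simp [hw.start]
  step_zero n := by simp [hw.step_zero]
  step_one n := by simp [hw.step_one]
  step n k hk := by simp [hw.step n k hk]

end IsWalkCount_s13

def walkCount : ℕ → ℕ → ℕ
  | 0, k => if k = 0 then 1 else 0
  | n + 1, 0 => ∑ j ∈ Icc 1 n, walkCount n j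
  | n + 1, 1 => walkCount n 0
  | n + 1, k + 2 => walkCount n (k + 1) + ∑ j ∈ Icc (k + 3) n, walkCount n j

theorem isWalkCount_walkCount : IsWalkCount_s13 walkCount where
  start _ := rfl
  step_zero _ := rfl
  step_one _ := rfl
  step n k hk := by
    obtain ⟨k, rfl⟩ := Nat.exists_eq_add_of_le' hk
    rfl

section WalkSeries

variable {K : Type*} [Field K] {V : K⟦X⟧}

noncomputable def walkTail (V : K⟦X⟧) : K⟦X⟧ := X * (1 - V - X ^ 2)⁻¹

noncomputable def walkSeries (V : K⟦X⟧) : ℕ → K⟦X⟧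
  | 0 => 1 + X * walkTail V
  | k + 1 => (1 - V) * V ^ k * walkTail V

theorem one_sub_sub_mul_inv (hXV : X ∣ V) : (1 - V - X ^ 2) * (1 - V - X ^ 2)⁻¹ = 1 :=
  PowerSeries.mul_inv_cancel _ (by simp [X_dvd_iff.mp hXV])

theorem X_pow_dvd_pow_mul_walkTail (hXV : X ∣ V) (a : ℕ) : X ^ (a + 1) ∣ V ^ a * walkTail V := by
  rw [pow_succ]
  exact mul_dvd_mul (pow_dvd_pow_of_dvd hXV a) (dvd_mul_right _ _)

theorem coeff_pow_mul_walkTail_of_le (hXV : X ∣ V) {a n : ℕ} (h : n ≤ a) :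
    coeff n (V ^ a * walkTail V) = 0 :=
  X_pow_dvd_iff.mp (X_pow_dvd_pow_mul_walkTail hXV a) n (by omega)

theorem sum_walkSeries_Icc (a d : ℕ) :
    ∑ j ∈ Icc (a + 1) (a + d), walkSeries V j = V ^ a * walkTail V - V ^ (a + d) * walkTail V := by
  induction d with
  | zero => simp
  | succ d ih =>
    rw [← add_assoc, sum_Icc_succ_top (by omega), ih, walkSeries]
    ring

theorem sum_coeff_walkSeries_Icc (hXV : X ∣ V) (a n : ℕ) :
    ∑ j ∈ Icc (a + 1) n, coeff n (walkSeries V j) = coeff n (V ^ a * walkTail V) := by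
  rcases le_or_gt a n with h | h
  · obtain ⟨d, rfl⟩ := Nat.exists_eq_add_of_le h
    rw [← map_sum, sum_walkSeries_Icc, map_sub, coeff_pow_mul_walkTail_of_le hXV le_rfl, sub_zero]
  · rw [Icc_eq_empty (by omega), sum_empty, coeff_pow_mul_walkTail_of_le hXV h.le]

theorem walkSeries_one (hXV : X ∣ V) : walkSeries V 1 = X * walkSeries V 0 := by
  simp only [walkSeries, walkTail]
  linear_combination X * one_sub_sub_mul_inv hXV

theorem walkSeries_add_two (hV : (1 + X) * V ^ 2 = (1 + X) * V - X) (k : ℕ) :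
    walkSeries V (k + 2) = X * (walkSeries V (k + 1) + V ^ (k + 2) * walkTail V) := by
  simp only [walkSeries]
  linear_combination (-(V ^ k * walkTail V)) * hV

theorem isWalkCount_coeff_walkSeries (hXV : X ∣ V) (hV : (1 + X) * V ^ 2 = (1 + X) * V - X) :
    IsWalkCount_s13 fun n k => coeff n (walkSeries V k) where
  start k := by
    rcases k with _ | k
    · simp [walkSeries]
    · rw [walkSeries, mul_assoc, coeff_zero_eq_constantCoeff_apply, map_mul,
        ← coeff_zero_eq_constantCoeff_apply (V ^ k * _),
        coeff_pow_mul_walkTail_of_le hXV (Nat.zero_le k)]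
      simp
  step_zero n := by
    simpa [walkSeries, coeff_succ_X_mul] using (sum_coeff_walkSeries_Icc hXV 0 n).symm
  step_one n := by rw [walkSeries_one hXV, coeff_succ_X_mul]
  step n k hk := by
    obtain ⟨k, rfl⟩ := Nat.exists_eq_add_of_le' hk
    rw [walkSeries_add_two hV, coeff_succ_X_mul, map_add, sum_coeff_walkSeries_Icc hXV]
    rfl

theorem sum_range_coeff_walkSeries (hXV : X ∣ V) (n : ℕ) :
    ∑ k ∈ range (n + 1), coeff n (walkSeries V k) = coeff n (1 + (1 + X) * walkTail V) := by
  rw [sum_range_eq_add_Ico _ (Nat.succ_pos n), Nat.succ_eq_add_one, Ico_add_one_right_eq_Icc,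
    ← zero_add 1, sum_coeff_walkSeries_Icc hXV, ← map_add, walkSeries]
  congr 1
  ring

theorem quartic_mul_walkTail (hXV : X ∣ V) (hV : (1 + X) * V ^ 2 = (1 + X) * V - X) :
    (1 - X - X ^ 2 + X ^ 3 + X ^ 4) * walkTail V = (1 + X) * (V - X ^ 2) := by
  rw [walkTail]
  linear_combination (1 - V - X ^ 2)⁻¹ * hV + ((1 + X) * (V - X ^ 2)) * one_sub_sub_mul_inv hXV

end WalkSeries

theorem stmt_13_general (c : ℕ → ℕ → ℕ)
    (h0 : ∀ k, c 0 k = if k = 0 then 1 else 0)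
    (hstep0 : ∀ n, c (n + 1) 0 = ∑ j ∈ Finset.Icc 1 n, c n j)
    (hstep1 : ∀ n, c (n + 1) 1 = c n 0)
    (hstep : ∀ n k, 2 ≤ k →
      c (n + 1) k = c n (k - 1) + ∑ j ∈ Finset.Icc (k + 1) n, c n j)
    (f : ℕ → ℕ) (hf : ∀ n, f n = ∑ k ∈ Finset.range (n + 1), c n k)
    (F : PowerSeries ℚ) (hF : F = mk fun n => (f n : ℚ)) :
    (∃ S : PowerSeries ℚ, S ^ 2 = 1 - 2 * X - 3 * X ^ 2 ∧ constantCoeff (R := ℚ) S = 1 ∧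
      2 * (1 - X - X ^ 2 + X ^ 3 + X ^ 4) * F = 3 - 3 * X ^ 2 - 2 * X ^ 3 - (1 + X) * S) ∧
    f 0 = 1 ∧ f 1 = 1 ∧ f 2 = 2 ∧ f 3 = 3 ∧ f 4 = 6 ∧ f 5 = 12 := by
  have hc : IsWalkCount_s13 c := ⟨h0, hstep0, hstep1, hstep⟩
  obtain ⟨V, hXV, hV⟩ := exists_walkRoot ℚ
  have hcV := hc.natCast.unique (isWalkCount_coeff_walkSeries hXV hV)
  have hFV : F = 1 + (1 + X) * walkTail V := by
    ext n
    rw [hF, coeff_mk, hf, Nat.cast_sum, ← sum_range_coeff_walkSeries hXV]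
    exact sum_congr rfl fun k _ => congrFun₂ hcV n k
  refine ⟨⟨1 + X - 2 * (1 + X) * V, ?_, ?_, ?_⟩, ?_⟩
  · linear_combination 4 * (1 + X) * hV
  · simp [X_dvd_iff.mp hXV]
  · rw [hFV]
    linear_combination 2 * (1 + X) * quartic_mul_walkTail hXV hV
  · obtain rfl := hc.unique isWalkCount_walkCount
    simp only [hf]
    decide

/-- walks on ℕ starting at 0 where from k the allowed moves are to any
position in [0,k-1] except 1, or to k+1. The generating function of all walks by
length is F(z) = (3 - 3z² - 2z³ - (1+z)√(1-2z-3z²)) / (2(1 - z - z² + z³ + z⁴)),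
with expansion 1 + z + 2z² + 3z³ + 6z⁴ + 12z⁵ + O(z⁶). -/
theorem stmt_13 (c : ℕ → ℕ → ℕ)
    (h0 : ∀ k, c 0 k = if k = 0 then 1 else 0)
    (hbound : ∀ n k, n < k → c n k = 0)
    (hstep0 : ∀ n, c (n + 1) 0 = ∑ j ∈ Finset.Icc 1 n, c n j)
    (hstep1 : ∀ n, c (n + 1) 1 = c n 0)
    (hstep : ∀ n k, 2 ≤ k →
      c (n + 1) k = c n (k - 1) + ∑ j ∈ Finset.Icc (k + 1) n, c n j)
    (f : ℕ → ℕ) (hf : ∀ n, f n = ∑ k ∈ Finset.range (n + 1), c n k)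
    (F : PowerSeries ℚ) (hF : F = mk fun n => (f n : ℚ)) :
    (∃ S : PowerSeries ℚ, S ^ 2 = 1 - 2 * X - 3 * X ^ 2 ∧ constantCoeff (R := ℚ) S = 1 ∧
      2 * (1 - X - X ^ 2 + X ^ 3 + X ^ 4) * F = 3 - 3 * X ^ 2 - 2 * X ^ 3 - (1 + X) * S) ∧
    f 0 = 1 ∧ f 1 = 1 ∧ f 2 = 2 ∧ f 3 = 3 ∧ f 4 = 6 ∧ f 5 = 12 :=
  stmt_13_general c h0 hstep0 hstep1 hstep f hf F hF
end

section
/- Let an ECO-system satisfy: (1) for every label k there is a production e_i(k) > k; (2) writing m(k) = |{i ≤ k : e_i(k) ≥ k - b}| for a fixed b ≥ 0, the sequence m(k) is nondecreasing and tends to infinity. Then the counting sequence f_n of nodes at level n grows superexponentially: f_{n(b+1)} ≥ m(s_0+b)m(s_0+2b)···m(s_0+nb), and consequently the ordinary generating function ∑ f_n z^n has radius of convergence 0. -/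
/-!
Every node labelled `k ≥ K + b` has at least `m k ≥ m (K + b)` children labelled `≥ K`.
Starting from a node at level `a + n b` with label `≥ s0 + a + n b` (it exists because some
production always increases the label) and lowering the threshold by `b` at each of the next
`n` levels, level `a + n (b + 1)` contains at least `∏ 1 ≤ i ≤ n, m (s0 + a + i b)` nodes.
As `m → ∞`, for every `M` the subsequence `f (a + n (b + 1))` eventually dominates `M ^ n`,
so `∑ f n x ^ n` diverges for every `x > 0`.
-/

open Filter Finset

theorem Multiset.card_filter_mul_le_card_filter_bind {α β : Type*} (s : Multiset α)
    (t : α → Multiset β) (p : α → Prop) [DecidablePred p] (q : β → Prop) [DecidablePred q]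
    (c : ℕ) (h : ∀ a ∈ s, p a → c ≤ Multiset.card ((t a).filter q)) :
    Multiset.card (s.filter p) * c ≤ Multiset.card ((s.bind t).filter q) := by
  induction s using Multiset.induction_on with
  | empty => simp
  | cons a s ih =>
    have ih := ih fun a' ha' => h a' (Multiset.mem_cons_of_mem ha')
    rw [Multiset.cons_bind, Multiset.filter_add, Multiset.card_add]
    by_cases ha : p a
    · rw [Multiset.filter_cons_of_pos _ ha, Multiset.card_cons, add_mul, one_mul, add_comm]
      exact add_le_add (h a (Multiset.mem_cons_self a s) ha) ih
    · rw [Multiset.filter_cons_of_neg _ ha]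
      exact ih.trans (Nat.le_add_left _ _)

theorem not_summable_of_pow_le {f : ℕ → ℝ} {x M : ℝ} (hx : 0 < x) (a d : ℕ) (hd : 0 < d)
    (hMx : 1 ≤ M * x ^ d) (hf : ∀ n, M ^ n ≤ f (a + n * d)) :
    ¬ Summable (fun n => f n * x ^ n) := by
  intro hsum
  have hsub : StrictMono (fun n => a + n * d) := fun n n' h => by
    simpa using Nat.mul_lt_mul_of_pos_right h hd
  have hzero := hsum.tendsto_atTop_zero.comp hsub.tendsto_atTop
  have hbound : ∀ n, x ^ a ≤ f (a + n * d) * x ^ (a + n * d) := fun n =>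
    calc x ^ a ≤ x ^ a * (M * x ^ d) ^ n := le_mul_of_one_le_right (by positivity) (one_le_pow₀ hMx)
      _ = M ^ n * x ^ (a + n * d) := by rw [pow_add, mul_comm n, pow_mul]; ring
      _ ≤ f (a + n * d) * x ^ (a + n * d) := by gcongr; exact hf n
  exact (pow_pos hx a).not_ge (ge_of_tendsto hzero (Eventually.of_forall hbound))

section ECO

variable {e : ℕ → List ℕ} {b : ℕ} {m : ℕ → ℕ} {levels : ℕ → Multiset ℕ}

theorem le_card_filter_children (hm : ∀ k, m k = ((e k).filter (fun l => k ≤ l + b)).length)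
    (hmono : Monotone m) {K k : ℕ} (hk : K + b ≤ k) :
    m (K + b) ≤ Multiset.card ((e k : Multiset ℕ).filter (K ≤ ·)) :=
  calc m (K + b) ≤ m k := hmono hk
    _ = Multiset.card ((e k : Multiset ℕ).filter (fun l => k ≤ l + b)) := by simp [hm]
    _ ≤ _ := Multiset.card_le_card (Multiset.monotone_filter_right _ fun l hl => by omega)

theorem card_filter_mul_prod_le (hm : ∀ k, m k = ((e k).filter (fun l => k ≤ l + b)).length)
    (hmono : Monotone m)
    (hlev : ∀ n, levels (n + 1) = (levels n).bind (fun k => (e k : Multiset ℕ)))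
    (L n N : ℕ) :
    Multiset.card ((levels N).filter (L + n * b ≤ ·)) * ∏ i ∈ Icc 1 n, m (L + i * b) ≤
      Multiset.card ((levels (N + n)).filter (L ≤ ·)) := by
  induction n generalizing N with
  | zero => simp
  | succ n ih =>
    have hstep : Multiset.card ((levels N).filter (L + (n + 1) * b ≤ ·)) * m (L + (n + 1) * b) ≤
        Multiset.card ((levels (N + 1)).filter (L + n * b ≤ ·)) := by
      rw [hlev, show L + (n + 1) * b = L + n * b + b by ring]
      exact Multiset.card_filter_mul_le_card_filter_bind _ _ _ _ _ fun k _ hk =>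
        le_card_filter_children hm hmono hk
    rw [prod_Icc_succ_top (by omega), ← mul_assoc, mul_right_comm, ← add_assoc, add_right_comm]
    exact (Nat.mul_le_mul_right _ hstep).trans (ih (N + 1))

theorem one_le_of_mem_levels {s0 : ℕ} (hs0 : 1 ≤ s0) (hpos : ∀ k, 1 ≤ k → ∀ l ∈ e k, 1 ≤ l)
    (hlev0 : levels 0 = {s0})
    (hlev : ∀ n, levels (n + 1) = (levels n).bind (fun k => (e k : Multiset ℕ))) :
    ∀ n, ∀ k ∈ levels n, 1 ≤ k := by
  intro n
  induction n with
  | zero => simpa [hlev0] using hs0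
  | succ n ih =>
    intro k hk
    obtain ⟨a, ha, hk⟩ := Multiset.mem_bind.1 (hlev n ▸ hk)
    exact hpos a (ih a ha) k (by simpa using hk)

theorem exists_mem_levels_ge {s0 : ℕ} (hs0 : 1 ≤ s0) (hpos : ∀ k, 1 ≤ k → ∀ l ∈ e k, 1 ≤ l)
    (hfwd : ∀ k, 1 ≤ k → ∃ l ∈ e k, k < l) (hlev0 : levels 0 = {s0})
    (hlev : ∀ n, levels (n + 1) = (levels n).bind (fun k => (e k : Multiset ℕ))) :
    ∀ n, ∃ k ∈ levels n, s0 + n ≤ k := by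
  intro n
  induction n with
  | zero => exact ⟨s0, by simp [hlev0], le_rfl⟩
  | succ n ih =>
    obtain ⟨k, hk, hsk⟩ := ih
    obtain ⟨l, hl, hkl⟩ := hfwd k (one_le_of_mem_levels hs0 hpos hlev0 hlev n k hk)
    exact ⟨l, hlev n ▸ Multiset.mem_bind.2 ⟨k, hk, by simpa using hl⟩, by omega⟩

theorem prod_le_card_levels {s0 : ℕ} (hs0 : 1 ≤ s0) (hpos : ∀ k, 1 ≤ k → ∀ l ∈ e k, 1 ≤ l)
    (hfwd : ∀ k, 1 ≤ k → ∃ l ∈ e k, k < l)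
    (hm : ∀ k, m k = ((e k).filter (fun l => k ≤ l + b)).length) (hmono : Monotone m)
    (hlev0 : levels 0 = {s0})
    (hlev : ∀ n, levels (n + 1) = (levels n).bind (fun k => (e k : Multiset ℕ))) (a n : ℕ) :
    ∏ i ∈ Icc 1 n, m (s0 + a + i * b) ≤ Multiset.card (levels (a + n * (b + 1))) := by
  obtain ⟨k, hk, hsk⟩ := exists_mem_levels_ge hs0 hpos hfwd hlev0 hlev (a + n * b)
  have hstart : 1 ≤ Multiset.card ((levels (a + n * b)).filter (s0 + a + n * b ≤ ·)) :=
    Multiset.card_pos_iff_exists_mem.2 ⟨k, Multiset.mem_filter.2 ⟨hk, by omega⟩⟩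
  calc ∏ i ∈ Icc 1 n, m (s0 + a + i * b)
      ≤ Multiset.card ((levels (a + n * b)).filter (s0 + a + n * b ≤ ·)) *
          ∏ i ∈ Icc 1 n, m (s0 + a + i * b) := Nat.le_mul_of_pos_left _ hstart
    _ ≤ Multiset.card ((levels (a + n * b + n)).filter (s0 + a ≤ ·)) :=
        card_filter_mul_prod_le hm hmono hlev _ _ _
    _ ≤ Multiset.card (levels (a + n * (b + 1))) := by
        rw [show a + n * b + n = a + n * (b + 1) by ring]
        exact Multiset.card_le_card (Multiset.filter_le _ _)

end ECO

theorem stmt_14_general (s0 : ℕ) (hs0 : 1 ≤ s0) (e : ℕ → List ℕ) (b : ℕ) (m : ℕ → ℕ)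
    (hpos : ∀ k, 1 ≤ k → ∀ l ∈ e k, 1 ≤ l)
    (hfwd : ∀ k, 1 ≤ k → ∃ l ∈ e k, k < l)
    (hm : ∀ k, m k = ((e k).filter (fun l => k ≤ l + b)).length)
    (hmono : Monotone m)
    (htend : Filter.Tendsto m Filter.atTop Filter.atTop)
    (levels : ℕ → Multiset ℕ)
    (hlev0 : levels 0 = {s0})
    (hlev : ∀ n, levels (n + 1) = (levels n).bind (fun k => (e k : Multiset ℕ)))
    (f : ℕ → ℕ) (hf : ∀ n, f n = Multiset.card (levels n)) :
    (∀ n, ∏ i ∈ Finset.Icc 1 n, m (s0 + i * b) ≤ f (n * (b + 1))) ∧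
    (∀ x : ℝ, 0 < x → ¬ Summable (fun n => (f n : ℝ) * x ^ n)) := by
  have hprod := prod_le_card_levels hs0 hpos hfwd hm hmono hlev0 hlev
  refine ⟨fun n => by simpa [hf] using hprod 0 n, fun x hx => ?_⟩
  obtain ⟨M, hM⟩ := exists_nat_gt (x ^ (b + 1))⁻¹
  obtain ⟨a, ha⟩ := eventually_atTop.1 (htend.eventually_ge_atTop M)
  refine not_summable_of_pow_le (M := M) hx a (b + 1) b.succ_pos ?_ fun n => ?_
  · rw [← inv_le_iff_one_le_mul₀ (by positivity)]
    exact hM.le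
  · calc (M : ℝ) ^ n = (M ^ (Icc 1 n).card : ℕ) := by simp
      _ ≤ (f (a + n * (b + 1)) : ℝ) := by
        rw [hf]
        exact_mod_cast (pow_card_le_prod _ _ _ fun i _ => ha _ (by omega)).trans (hprod a n)

/-- if every label has a production strictly larger than itself, and
m(k) = #{i ≤ k : e_i(k) ≥ k - b} is nondecreasing and tends to infinity, then
f_{n(b+1)} ≥ m(s0+b)m(s0+2b)···m(s0+nb), and the ordinary generating function
∑ f_n z^n has radius of convergence 0. -/
theorem stmt_14 (s0 : ℕ) (hs0 : 1 ≤ s0) (e : ℕ → List ℕ) (b : ℕ) (m : ℕ → ℕ)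
    (hlen : ∀ k, 1 ≤ k → (e k).length = k)
    (hpos : ∀ k, 1 ≤ k → ∀ l ∈ e k, 1 ≤ l)
    (hfwd : ∀ k, 1 ≤ k → ∃ l ∈ e k, k < l)
    (hm : ∀ k, m k = ((e k).filter (fun l => k ≤ l + b)).length)
    (hmono : Monotone m)
    (htend : Filter.Tendsto m Filter.atTop Filter.atTop)
    (levels : ℕ → Multiset ℕ)
    (hlev0 : levels 0 = {s0})
    (hlev : ∀ n, levels (n + 1) = (levels n).bind (fun k => (e k : Multiset ℕ)))
    (f : ℕ → ℕ) (hf : ∀ n, f n = Multiset.card (levels n)) :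
    (∀ n, ∏ i ∈ Finset.Icc 1 n, m (s0 + i * b) ≤ f (n * (b + 1))) ∧
    (∀ x : ℝ, 0 < x → ¬ Summable (fun n => (f n : ℝ) * x ^ n)) :=
  stmt_14_general s0 hs0 e b m hpos hfwd hm hmono htend levels hlev0 hlev f hf
end

section
/- For the ECO-system with axiom (2) and rule (k) ↝ (k)(k+1)^{k-1}, the number of nodes at level n whose label is k+2 equals k!·binom(n,k), and the exponential generating function of the total counts f_n is e^z/(1-z); in particular f_n = ∑_{k=0}^n n!/k! and f_n ~ e·n!. -/
open PowerSeries

/- The recurrence `f (n+1) (k+3) = f n (k+3) + (k+1) · f n (k+2)` is Pascal's rule multiplied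
through by factorials, so `f n (k+2) = k! · C(n, k)`, the number of arrangements of length `k`
of an `n`-set. Hence level `n` carries `∑_{k ≤ n} n!/(n-k)! = ∑_{k ≤ n} n!/k!` nodes, and
`t n / n!` is the `n`-th partial sum of `∑ 1/k!`: multiplying its generating function by `1 - X`
recovers the series of `exp`, and the partial sums tend to `e`. -/

section

open Finset Nat

theorem PowerSeries.one_sub_X_mul_mk_sum_range {R : Type*} [CommRing R] (c : ℕ → R) :
    (1 - X) * PowerSeries.mk (fun n => ∑ k ∈ range (n + 1), c k) = PowerSeries.mk c := by
  ext n
  rw [sub_mul, one_mul, map_sub]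
  cases n with
  | zero => simp
  | succ n => simp [coeff_succ_X_mul, sum_range_succ _ (n + 1)]

def numArrangements (n : ℕ) : ℕ := ∑ k ∈ range (n + 1), n ! / k !

theorem numArrangements_div_factorial {K : Type*} [Field K] [CharZero K] (n : ℕ) :
    (numArrangements n : K) / n ! = ∑ k ∈ range (n + 1), 1 / (k ! : K) := by
  rw [numArrangements, cast_sum, sum_div]
  refine sum_congr rfl fun k hk => ?_
  have hkn : k ! ∣ n ! := factorial_dvd_factorial (Nat.lt_succ_iff.mp (mem_range.mp hk))
  rw [Nat.cast_div hkn (cast_ne_zero.mpr (factorial_ne_zero k)), div_right_comm,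
    div_self (cast_ne_zero.mpr (factorial_ne_zero n))]

theorem one_sub_X_mul_mk_numArrangements_div_factorial :
    (1 - X) * PowerSeries.mk (fun n => (numArrangements n : ℚ) / n !) = exp ℚ := by
  simp_rw [numArrangements_div_factorial, one_sub_X_mul_mk_sum_range]
  ext n
  simp [coeff_exp]

theorem tendsto_numArrangements_div_factorial :
    Filter.Tendsto (fun n => (numArrangements n : ℝ) / n !) Filter.atTop (nhds (Real.exp 1)) := by
  have hsum : HasSum (fun k => 1 / (k ! : ℝ)) (Real.exp 1) := by
    simpa [Real.exp_eq_exp_ℝ] using NormedSpace.expSeries_div_hasSum_exp (1 : ℝ)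
  simp_rw [numArrangements_div_factorial]
  exact hsum.tendsto_sum_nat.comp (Filter.tendsto_add_atTop_nat 1)

variable {f : ℕ → ℕ → ℕ}

theorem arrangementTree_label_add_two (h0 : ∀ k, f 0 k = if k = 2 then 1 else 0)
    (hstep : ∀ n k, f (n + 1) k = f n k + (k - 2) * f n (k - 1)) (n k : ℕ) :
    f n (k + 2) = k ! * n.choose k := by
  induction n generalizing k with
  | zero => cases k <;> simp [h0]
  | succ n ih =>
    rw [hstep]
    cases k with
    | zero => simp [ih 0]
    | succ k =>
      rw [show k + 1 + 2 - 1 = k + 2 by omega, ih (k + 1), ih k, Nat.add_sub_cancel,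
        choose_succ_succ, factorial_succ]
      ring

theorem arrangementTree_label_lt_two (h0 : ∀ k, f 0 k = if k = 2 then 1 else 0)
    (hstep : ∀ n k, f (n + 1) k = f n k + (k - 2) * f n (k - 1)) (n : ℕ) {k : ℕ}
    (hk : k < 2) :
    f n k = 0 := by
  induction n with
  | zero => simp [h0, hk.ne]
  | succ n ih => simp [hstep, ih, Nat.sub_eq_zero_of_le hk.le]

theorem arrangementTree_sum_level (h0 : ∀ k, f 0 k = if k = 2 then 1 else 0)
    (hstep : ∀ n k, f (n + 1) k = f n k + (k - 2) * f n (k - 1)) (n : ℕ) :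
    ∑ k ∈ range (n + 3), f n k = numArrangements n := by
  rw [sum_range_succ', sum_range_succ', arrangementTree_label_lt_two h0 hstep n (by norm_num),
    arrangementTree_label_lt_two h0 hstep n (by norm_num), numArrangements,
    ← sum_range_reflect (fun k => n ! / k !) (n + 1), add_zero, add_zero, Nat.add_sub_cancel]
  refine Finset.sum_congr rfl fun k hk => ?_
  have hkn : k ≤ n := Nat.lt_succ_iff.mp (mem_range.mp hk)
  rw [arrangementTree_label_add_two h0 hstep, ← descFactorial_eq_factorial_mul_choose,
    descFactorial_eq_div hkn]

end

/-- for the ECO-system with axiom (2) and rule (k) ↝ (k)(k+1)^{k-1}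
(arrangements), the number of nodes at level n labeled k+2 is k!·binom(n,k), the
total count is t n = ∑_{k≤n} n!/k!, the exponential generating function of t is
e^z/(1-z), and t n ~ e·n!. -/
theorem stmt_15 (f : ℕ → ℕ → ℕ)
    (h0 : ∀ k, f 0 k = if k = 2 then 1 else 0)
    (hstep : ∀ n k, f (n + 1) k = f n k + (k - 2) * f n (k - 1))
    (t : ℕ → ℕ) (ht : ∀ n, t n = ∑ k ∈ Finset.range (n + 3), f n k) :
    (∀ n k, f n (k + 2) = Nat.factorial k * Nat.choose n k) ∧
    (∀ n, t n = ∑ k ∈ Finset.range (n + 1), Nat.factorial n / Nat.factorial k) ∧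
    ((1 - X) * mk (fun n => (t n : ℚ) / (Nat.factorial n : ℚ)) = exp ℚ) ∧
    Filter.Tendsto (fun n => (t n : ℝ) / (Nat.factorial n : ℝ))
      Filter.atTop (nhds (Real.exp 1)) := by
  obtain rfl : t = numArrangements :=
    funext fun n => (ht n).trans (arrangementTree_sum_level h0 hstep n)
  exact ⟨arrangementTree_label_add_two h0 hstep, fun _ => rfl,
    one_sub_X_mul_mk_numArrangements_div_factorial, tendsto_numArrangements_div_factorial⟩
end

section
/- For the ECO-system with axiom (1) and rule (k) ↝ (k-1)^{k-1}(k+1), the number f_{n,k} of nodes at level n labeled k equals the number of involutions of {1,...,n} having exactly k-1 fixed points, and the bivariate exponential generating function is ∑_{n,k} f_{n,k} u^k z^n/n! = u·exp(zu + z²/2); equivalently the counting sequence f_n satisfies f_{n+1} = f_n + n·f_{n-1} (the involution recurrence). -/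
/-!
Everything follows from the closed form `f (k + 2j) (k + 1) * (k! * 2^j * j!) = (k + 2j)!`,
proved by induction from the ECO rule, together with the vanishing of `f n (k + 1)` unless
`n - k` is even and nonnegative. An involution of an `n`-set with `k` fixed points is exactly a
permutation of cycle type `2^j` with `n = k + 2j`, and Mathlib's count of permutations of a given
cycle type gives the same closed form. The closed form is the coefficient of `u^(k+1) z^n / n!`
in `u exp(zu) exp(z²/2)`, and it also yields `k f_{n+1,k+1} = (n+1) f_{n,k}`, which turns the
ECO rule into `f_{n+2,k} = f_{n+1,k-1} + (n+1) f_{n,k}`; summing over `k` gives the involution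
recurrence.
-/

open scoped Nat

section

open Finset

namespace Equiv.Perm

variable {α : Type*} [Fintype α] [DecidableEq α]

theorem cycleType_eq_replicate_of_mul_self_eq_one {σ : Perm α} (hσ : σ * σ = 1) :
    σ.cycleType = Multiset.replicate σ.cycleType.card 2 :=
  cycleType_of_pow_prime_eq_one (by rwa [sq])

theorem card_eq_card_fixed_add_two_mul {σ : Perm α} (hσ : σ * σ = 1) :
    Fintype.card α = #{x | σ x = x} + 2 * σ.cycleType.card := by
  have hsum : σ.cycleType.sum = 2 * σ.cycleType.card := by
    rw [cycleType_eq_replicate_of_mul_self_eq_one hσ]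
    simp [mul_comm]
  rw [← hsum, sum_cycleType, support, ← Finset.card_univ]
  exact (card_filter_add_card_filter_not _).symm

theorem mul_self_eq_one_and_card_fixed_iff {σ : Perm α} {k j : ℕ}
    (hα : Fintype.card α = k + 2 * j) :
    (σ * σ = 1 ∧ #{x | σ x = x} = k) ↔ σ.cycleType = Multiset.replicate j 2 := by
  constructor
  · rintro ⟨hσ, hfix⟩
    have hcard := card_eq_card_fixed_add_two_mul hσ
    rw [cycleType_eq_replicate_of_mul_self_eq_one hσ]
    congr 1
    omega
  · intro hσ
    have hσ' : σ * σ = 1 := by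
      rw [← sq, pow_prime_eq_one_iff (p := 2), hσ]
      exact fun c => Multiset.eq_of_mem_replicate
    refine ⟨hσ', ?_⟩
    have hcard := card_eq_card_fixed_add_two_mul hσ'
    rw [hσ, Multiset.card_replicate] at hcard
    omega

theorem card_involutions_mul_eq {k j : ℕ} (hα : Fintype.card α = k + 2 * j) :
    #{σ : Perm α | σ * σ = 1 ∧ #{x | σ x = x} = k} * (k ! * 2 ^ j * j !) = (Fintype.card α)! := by
  have hsum : (Multiset.replicate j 2).sum = 2 * j := by simp [mul_comm]
  have hprod : ∏ n ∈ (Multiset.replicate j 2).toFinset, ((Multiset.replicate j 2).count n)! = j ! := by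
    rcases j.eq_zero_or_pos with rfl | hj
    · simp
    · simp [hj.ne']
  have key := card_of_cycleType_mul_eq α (Multiset.replicate j 2)
  rw [if_pos ⟨by omega, fun a ha => (Multiset.eq_of_mem_replicate ha).ge⟩, hsum, hprod,
    Multiset.prod_replicate, show Fintype.card α - 2 * j = k by omega] at key
  rw [← key]
  congr 2
  ext σ
  simp only [mem_filter, mem_univ, true_and]
  exact mul_self_eq_one_and_card_fixed_iff hα

theorem card_involutions_eq_zero {k : ℕ} (hα : ¬ ∃ j, Fintype.card α = k + 2 * j) :
    #{σ : Perm α | σ * σ = 1 ∧ #{x | σ x = x} = k} = 0 := by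
  rw [Finset.card_eq_zero, filter_eq_empty_iff]
  rintro σ - ⟨hσ, rfl⟩
  exact hα ⟨_, card_eq_card_fixed_add_two_mul hσ⟩

end Equiv.Perm

namespace InvolutionECO

variable {f : ℕ → ℕ → ℕ} (h0 : ∀ k, f 0 k = if k = 1 then 1 else 0)
  (hstep : ∀ n k, f (n + 1) k = k * f n (k + 1) + (if 1 ≤ k then f n (k - 1) else 0))
include h0 hstep

theorem exists_eq_add_two_mul_of_ne_zero {n k : ℕ} (h : f n k ≠ 0) : ∃ i j, k = i + 1 ∧ n = i + 2 * j := by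
  induction n generalizing k with
  | zero =>
    rw [h0] at h
    exact ⟨0, 0, by split_ifs at h <;> simp_all⟩
  | succ n ih =>
    rw [hstep] at h
    by_cases h₁ : k * f n (k + 1) = 0
    · rw [h₁, zero_add] at h
      split_ifs at h with hk
      · obtain ⟨i, j, hi, rfl⟩ := ih h
        exact ⟨i + 1, j, by omega, by omega⟩
      · exact absurd rfl h
    · have hk := left_ne_zero_of_mul h₁
      obtain ⟨i, j, hi, rfl⟩ := ih (right_ne_zero_of_mul h₁)
      exact ⟨i - 1, j + 1, by omega, by omega⟩

theorem apply_zero (n : ℕ) : f n 0 = 0 := by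
  by_contra h
  obtain ⟨i, j, hi, -⟩ := exists_eq_add_two_mul_of_ne_zero h0 hstep h
  omega

theorem apply_succ_eq_zero {n k : ℕ} (h : ¬ ∃ j, n = k + 2 * j) : f n (k + 1) = 0 := by
  by_contra hf
  obtain ⟨i, j, hi, rfl⟩ := exists_eq_add_two_mul_of_ne_zero h0 hstep hf
  exact h ⟨j, by rw [Nat.add_right_cancel hi]⟩

theorem apply_eq_zero_of_lt {n k : ℕ} (h : n + 1 < k) : f n k = 0 := by
  by_contra hf
  obtain ⟨i, j, rfl, rfl⟩ := exists_eq_add_two_mul_of_ne_zero h0 hstep hf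
  omega

theorem apply_mul_factorial {n k j : ℕ} (h : n = k + 2 * j) :
    f n (k + 1) * (k ! * 2 ^ j * j !) = n ! := by
  induction n generalizing k j with
  | zero =>
    obtain ⟨rfl, rfl⟩ : k = 0 ∧ j = 0 := by omega
    simp [h0]
  | succ n ih =>
    have hA : (k + 1) * f n (k + 2) * (k ! * 2 ^ j * j !) = 2 * j * n ! := by
      rcases j with _ | j
      · simp [apply_eq_zero_of_lt h0 hstep (show n + 1 < k + 2 by omega)]
      · rw [← ih (k := k + 1) (j := j) (by omega), Nat.factorial_succ k, Nat.factorial_succ j]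
        ring
    have hB : f n k * (k ! * 2 ^ j * j !) = k * n ! := by
      rcases k with _ | k
      · simp [apply_zero h0 hstep]
      · rw [← ih (k := k) (j := j) (by omega), Nat.factorial_succ k]
        ring
    rw [hstep, if_pos (by omega), Nat.add_sub_cancel, add_mul, hA, hB, Nat.factorial_succ, h]
    ring

theorem mul_apply_succ_succ (n k : ℕ) : k * f (n + 1) (k + 1) = (n + 1) * f n k := by
  rcases k with _ | i
  · simp [apply_zero h0 hstep]
  by_cases h : ∃ j, n = i + 2 * j
  · obtain ⟨j, hj⟩ := h
    have hD : 0 < i ! * 2 ^ j * j ! := by positivity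
    refine Nat.eq_of_mul_eq_mul_right hD ?_
    calc (i + 1) * f (n + 1) (i + 1 + 1) * (i ! * 2 ^ j * j !)
        = f (n + 1) (i + 1 + 1) * ((i + 1)! * 2 ^ j * j !) := by
          rw [Nat.factorial_succ]; ring
      _ = (n + 1) * (f n (i + 1) * (i ! * 2 ^ j * j !)) := by
          rw [apply_mul_factorial h0 hstep (by omega), apply_mul_factorial h0 hstep hj,
            Nat.factorial_succ]
      _ = (n + 1) * f n (i + 1) * (i ! * 2 ^ j * j !) := by ring
  · rw [apply_succ_eq_zero h0 hstep h,
      apply_succ_eq_zero h0 hstep (fun ⟨j, hj⟩ => h ⟨j, by omega⟩), mul_zero, mul_zero]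

theorem apply_add_two (n k : ℕ) :
    f (n + 2) k = (if 1 ≤ k then f (n + 1) (k - 1) else 0) + (n + 1) * f n k := by
  rw [hstep, mul_apply_succ_succ h0 hstep, add_comm]

theorem sum_range_add_two (n : ℕ) :
    ∑ k ∈ range (n + 4), f (n + 2) k
      = ∑ k ∈ range (n + 3), f (n + 1) k + (n + 1) * ∑ k ∈ range (n + 2), f n k := by
  simp only [apply_add_two h0 hstep n, sum_add_distrib, ← mul_sum]
  congr 1
  · rw [sum_range_succ']
    simp
  · congr 1
    refine (sum_subset (range_subset_range.2 (by omega)) fun k _ hk => ?_).symm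
    exact apply_eq_zero_of_lt h0 hstep (by simp at hk; omega)

theorem factorial_inv_mul_apply_succ {n k : ℕ} (hk : k ≤ n) :
    (n ! : ℚ)⁻¹ * f n (k + 1) = (k ! : ℚ)⁻¹ *
      (if (n - k) % 2 = 0 then ((((n - k) / 2)! * 2 ^ ((n - k) / 2) : ℕ) : ℚ)⁻¹ else 0) := by
  split_ifs with h
  · obtain ⟨j, hj⟩ : ∃ j, n = k + 2 * j := ⟨(n - k) / 2, by omega⟩
    have hf : (f n (k + 1) : ℚ) * (k ! * 2 ^ j * j !) = n ! := mod_cast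
      apply_mul_factorial h0 hstep hj
    rw [show (n - k) / 2 = j by omega, eq_div_of_mul_eq (by positivity) hf]
    push_cast
    field_simp
  · rw [apply_succ_eq_zero h0 hstep (fun ⟨j, hj⟩ => h (by omega))]
    simp

theorem sum_range_smul_X_pow (n : ℕ) :
    ∑ k ∈ range (n + 2), (f n k : ℚ) • (Polynomial.X : Polynomial ℚ) ^ k
      = Polynomial.X * ∑ k ∈ range (n + 1), (f n (k + 1) : ℚ) • Polynomial.X ^ k := by
  rw [sum_range_succ', apply_zero h0 hstep, mul_sum]
  simp [pow_succ']

theorem apply_succ_eq_card_involutions (n k : ℕ) :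
    f n (k + 1) = #{σ : Equiv.Perm (Fin n) | σ * σ = 1 ∧ #{x | σ x = x} = k} := by
  by_cases h : ∃ j, n = k + 2 * j
  · obtain ⟨j, hj⟩ := h
    have hcard := Equiv.Perm.card_involutions_mul_eq (α := Fin n) (by rwa [Fintype.card_fin])
    rw [Fintype.card_fin] at hcard
    exact Nat.eq_of_mul_eq_mul_right (by positivity)
      ((apply_mul_factorial h0 hstep hj).trans hcard.symm)
  · rw [apply_succ_eq_zero h0 hstep h,
      Equiv.Perm.card_involutions_eq_zero (by rwa [Fintype.card_fin])]

end InvolutionECO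

end

open PowerSeries

/-- for the ECO-system with axiom (1) and rule (k) ↝ (k-1)^{k-1}(k+1),
the number f n (k+1) of nodes at level n labeled k+1 equals the number of involutions
of {1,...,n} with exactly k fixed points; the bivariate exponential generating function
is ∑ f_{n,k} u^k z^n/n! = u·exp(zu)·exp(z²/2); and the total counts satisfy the
involution recurrence t_{n+2} = t_{n+1} + (n+1) t_n. -/
theorem stmt_16 (f : ℕ → ℕ → ℕ)
    (h0 : ∀ k, f 0 k = if k = 1 then 1 else 0)
    (hstep : ∀ n k, f (n + 1) k = k * f n (k + 1) + (if 1 ≤ k then f n (k - 1) else 0))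
    (t : ℕ → ℕ) (ht : ∀ n, t n = ∑ k ∈ Finset.range (n + 2), f n k) :
    (∀ n k, f n (k + 1) =
      Nat.card {σ : Equiv.Perm (Fin n) // σ * σ = 1 ∧
        (Finset.univ.filter fun x => σ x = x).card = k}) ∧
    ((mk (fun n => (Nat.factorial n : ℚ)⁻¹ •
        ∑ k ∈ Finset.range (n + 2), (f n k : ℚ) • Polynomial.X ^ k) :
        PowerSeries (Polynomial ℚ))
      = PowerSeries.C (R := Polynomial ℚ) Polynomial.X
        * (mk fun n => (Nat.factorial n : ℚ)⁻¹ • Polynomial.X ^ n)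
        * (mk fun n => if n % 2 = 0 then
            (((Nat.factorial (n / 2) * 2 ^ (n / 2) : ℕ) : ℚ))⁻¹ • 1 else 0)) ∧
    (∀ n, t (n + 2) = t (n + 1) + (n + 1) * t n) := by
  refine ⟨fun n k => ?_, ?_, fun n => ?_⟩
  · rw [Nat.card_eq_fintype_card, Fintype.card_subtype]
    exact InvolutionECO.apply_succ_eq_card_involutions h0 hstep n k
  · ext n : 1
    rw [coeff_mk, mul_assoc, coeff_C_mul, coeff_mul, InvolutionECO.sum_range_smul_X_pow h0 hstep,
      ← mul_smul_comm, Finset.Nat.sum_antidiagonal_eq_sum_range_succ_mk,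
      Finset.smul_sum]
    congr 1
    refine Finset.sum_congr rfl fun k hk => ?_
    simp only [coeff_mk, smul_smul, InvolutionECO.factorial_inv_mul_apply_succ h0 hstep
      (Nat.lt_succ_iff.1 (Finset.mem_range.1 hk))]
    split_ifs <;> simp [smul_smul, mul_comm]
  · rw [ht, ht, ht]
    exact InvolutionECO.sum_range_add_two h0 hstep n
end

section
/- For the ECO-system with axiom (1) and rule (k) ↝ (k)^{k-1}(k+1), the number f_{n,k+1} of nodes at level n labeled k+1 equals the Stirling number of the second kind S(n,k); consequently f_n is the Bell number B_n, whose exponential generating function is exp(e^z - 1), and f_n satisfies the Bell recurrence f_{n+1} = ∑_{j=0}^n binom(n,j) f_j. -/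
/-!
Deleting a point `a` from a partition of `insert a s` leaves a partition `P` of `s`, and `a` either
formed a singleton block or had joined one of the blocks of `P`; conversely every such choice
gives a partition of `insert a s`. Counting partitions with `k + 1` blocks on both sides gives
`S(n+1, k+1) = (k+1) S(n, k+1) + S(n, k)`, which is exactly the ECO rule, so the number of nodes
at level `n` labelled `k + 1` is `S(n, k)` and the level total is the Bell number. Induction on `n`
with Pascal's rule turns the Stirling recurrence into `S(n+1, k+1) = ∑ j, C(n, j) S(j, k)`; summed
over `k` this is the Bell recurrence, which is the coefficientwise form of `E' = e^z E`.
-/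

open PowerSeries
open scoped Nat Finset

namespace Finpartition

open Finset

variable {α : Type*} [DecidableEq α] {s : Finset α} {a : α}

theorem mem_parts_iff_exists_part {P : Finpartition s} {c : Finset α} :
    c ∈ P.parts ↔ ∃ x ∈ s, P.part x = c :=
  ⟨fun hc ↦ P.part_surjOn hc, by rintro ⟨x, hx, rfl⟩; exact P.part_mem.2 hx⟩

theorem ext_of_part {P Q : Finpartition s} (h : ∀ x ∈ s, P.part x = Q.part x) : P = Q := by
  ext c
  simp only [mem_parts_iff_exists_part]
  exact exists_congr fun x ↦ and_congr_right fun hx ↦ by rw [h x hx]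

section insertPoint

variable (P : Finpartition s) {b : Finset α}

theorem disjoint_insert_of_mem_parts (ha : a ∉ s) (hb : b ∈ insert ∅ P.parts) {d : Finset α}
    (hd : d ∈ P.parts) (hdb : d ≠ b) : Disjoint d (insert a b) := by
  rw [disjoint_insert_right]
  refine ⟨fun had ↦ ha (P.le hd had), ?_⟩
  rcases mem_insert.1 hb with rfl | hb
  · exact disjoint_empty_right d
  · exact P.disjoint hd hb hdb

theorem subset_of_mem_insert_empty (hb : b ∈ insert ∅ P.parts) : b ⊆ s := by
  rcases mem_insert.1 hb with rfl | hb
  · exact empty_subset s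
  · exact P.le hb

theorem sup_erase_sup_insert (hb : b ∈ insert ∅ P.parts) :
    (P.parts.erase b).sup id ⊔ insert a b = insert a s := by
  have hbs := P.subset_of_mem_insert_empty hb
  have h : (insert b (P.parts.erase b)).sup id = s := by
    rw [show insert b (P.parts.erase b) = insert b P.parts by ext; simp; tauto, sup_insert,
      P.sup_parts, id, sup_eq_right.2 hbs]
  rw [sup_insert, id] at h
  rw [sup_eq_union, union_insert, ← sup_eq_union, sup_comm, h]

/-- The partition of `insert a s` in which `a` joins the block `b` of `P`, or forms the new
singleton block `{a}` when `b = ∅`. -/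
def insertPoint (ha : a ∉ s) (hb : b ∈ insert ∅ P.parts) : Finpartition (insert a s) :=
  (P.ofSubset (P.parts.erase_subset b) rfl).extend (insert_ne_empty a b)
    (Finset.disjoint_sup_left.2 fun _ hd ↦
      P.disjoint_insert_of_mem_parts ha hb (mem_of_mem_erase hd) (ne_of_mem_erase hd))
    (P.sup_erase_sup_insert hb)

theorem card_insertPoint_parts (ha : a ∉ s) (hb : b ∈ insert ∅ P.parts) :
    #(P.insertPoint ha hb).parts = #P.parts + if b = ∅ then 1 else 0 := by
  rw [insertPoint, card_extend, ofSubset_parts]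
  rcases mem_insert.1 hb with rfl | hb
  · rw [erase_eq_of_notMem P.empty_notMem_parts, if_pos rfl]
  · rw [card_erase_of_mem hb, if_neg (P.ne_empty hb)]
    have := card_pos.2 ⟨b, hb⟩
    omega

theorem part_insertPoint (ha : a ∉ s) (hb : b ∈ insert ∅ P.parts) {x : α}
    (hx : x ∈ insert a s) :
    (P.insertPoint ha hb).part x = if x ∈ insert a b then insert a b else P.part x := by
  split_ifs with hxb
  · exact part_eq_of_mem _ (mem_insert_self _ _) hxb
  · have hxs : x ∈ s := (mem_insert.1 hx).resolve_left fun h ↦ hxb (h ▸ mem_insert_self _ _)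
    refine part_eq_of_mem _ (mem_insert_of_mem (mem_erase.2 ⟨?_, P.part_mem.2 hxs⟩))
      (P.mem_part hxs)
    intro h
    exact hxb (mem_insert_of_mem (h ▸ P.mem_part hxs))

theorem part_insertPoint_self (ha : a ∉ s) (hb : b ∈ insert ∅ P.parts) :
    (P.insertPoint ha hb).part a = insert a b := by
  rw [part_insertPoint _ ha hb (mem_insert_self a s), if_pos (mem_insert_self a b)]

end insertPoint

section erasePoint

variable (P : Finpartition (insert a s)) (ha : a ∉ s)

def erasePoint : Finpartition s :=
  (P.avoid {a}).copy (by rw [sdiff_singleton_eq_erase, erase_insert ha])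

theorem mem_erasePoint_parts {c : Finset α} :
    c ∈ (P.erasePoint ha).parts ↔ ∃ d ∈ P.parts, ¬d ⊆ {a} ∧ d.erase a = c := by
  simp [erasePoint, sdiff_singleton_eq_erase]

theorem part_erasePoint {x : α} (hx : x ∈ s) :
    (P.erasePoint ha).part x = (P.part x).erase a := by
  have hxa : x ≠ a := fun h ↦ ha (h ▸ hx)
  have hxP : x ∈ P.part x := P.mem_part (mem_insert_of_mem hx)
  refine part_eq_of_mem _ ((P.mem_erasePoint_parts ha).2 ⟨P.part x, P.part_mem.2
    (mem_insert_of_mem hx), fun h ↦ hxa (mem_singleton.1 (h hxP)), rfl⟩) (mem_erase.2 ⟨hxa, hxP⟩)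

theorem erase_part_mem_insert_empty :
    (P.part a).erase a ∈ insert ∅ (P.erasePoint ha).parts := by
  obtain h | ⟨x, hx⟩ := ((P.part a).erase a).eq_empty_or_nonempty
  · exact h ▸ mem_insert_self _ _
  have hxs : x ∈ s := (mem_insert.1 (P.part_subset a (mem_of_mem_erase hx))).resolve_left
    (ne_of_mem_erase hx)
  rw [← P.part_eq_of_mem (P.part_mem.2 (mem_insert_self a s)) (mem_of_mem_erase hx),
    ← part_erasePoint _ ha hxs]
  exact mem_insert_of_mem ((P.erasePoint ha).part_mem.2 hxs)

end erasePoint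

theorem erasePoint_insertPoint (P : Finpartition s) (ha : a ∉ s) {b : Finset α}
    (hb : b ∈ insert ∅ P.parts) : (P.insertPoint ha hb).erasePoint ha = P := by
  refine ext_of_part fun x hx ↦ ?_
  have hxa : x ≠ a := fun h ↦ ha (h ▸ hx)
  rw [part_erasePoint _ ha hx, part_insertPoint _ ha hb (mem_insert_of_mem hx)]
  split_ifs with hxb
  · have hxb : x ∈ b := (mem_insert.1 hxb).resolve_left hxa
    have hbP : b ∈ P.parts := (mem_insert.1 hb).resolve_left (ne_empty_of_mem hxb)
    rw [erase_insert fun hab ↦ ha (P.le hbP hab), P.part_eq_of_mem hbP hxb]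
  · exact erase_eq_of_notMem fun haP ↦ ha (P.part_subset x haP)

theorem insertPoint_erasePoint (P : Finpartition (insert a s)) (ha : a ∉ s) :
    (P.erasePoint ha).insertPoint ha (P.erase_part_mem_insert_empty ha) = P := by
  have haP : a ∈ P.part a := P.mem_part (mem_insert_self a s)
  refine ext_of_part fun x hx ↦ ?_
  rw [part_insertPoint _ ha _ hx, insert_erase haP]
  split_ifs with hxa
  · exact (P.part_eq_of_mem (P.part_mem.2 (mem_insert_self a s)) hxa).symm
  · have hxs : x ∈ s := (mem_insert.1 hx).resolve_left fun h ↦ hxa (h ▸ haP)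
    rw [part_erasePoint _ ha hxs]
    refine erase_eq_of_notMem fun h ↦ hxa ?_
    rw [P.part_eq_of_mem (P.part_mem.2 hx) h]
    exact P.mem_part hx

def insertPointEquiv (ha : a ∉ s) :
    (Σ P : Finpartition s, ↥(insert ∅ P.parts)) ≃ Finpartition (insert a s) where
  toFun x := x.1.insertPoint ha x.2.2
  invFun P := ⟨P.erasePoint ha, _, P.erase_part_mem_insert_empty ha⟩
  left_inv x := Sigma.subtype_ext (erasePoint_insertPoint _ ha _) <| by
    simp [part_insertPoint_self, erase_insert fun h ↦ ha (x.1.subset_of_mem_insert_empty x.2.2 h)]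
  right_inv P := insertPoint_erasePoint P ha

theorem sum_card_parts_insert {M : Type*} [AddCommMonoid M] (ha : a ∉ s) (g : ℕ → M) :
    ∑ P : Finpartition (insert a s), g #P.parts =
      ∑ P : Finpartition s, (g (#P.parts + 1) + #P.parts • g #P.parts) := by
  rw [← (insertPointEquiv ha).sum_comp, Fintype.sum_sigma]
  refine Fintype.sum_congr _ _ fun P ↦ ?_
  simp only [insertPointEquiv, Equiv.coe_fn_mk, card_insertPoint_parts]
  rw [sum_coe_sort (insert ∅ P.parts) (fun b ↦ g (#P.parts + if b = ∅ then 1 else 0)),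
    sum_insert P.empty_notMem_parts, if_pos rfl,
    sum_congr rfl fun b hb ↦ by rw [if_neg (P.ne_empty hb), add_zero], sum_const]

theorem card_subtype_card_parts_insert (ha : a ∉ s) (k : ℕ) :
    Nat.card {P : Finpartition (insert a s) // #P.parts = k + 1} =
      (k + 1) * Nat.card {P : Finpartition s // #P.parts = k + 1} +
        Nat.card {P : Finpartition s // #P.parts = k} := by
  simp only [Nat.card_eq_fintype_card, Fintype.card_subtype, card_filter, mul_sum,
    ← sum_add_distrib]
  rw [sum_card_parts_insert ha fun m ↦ if m = k + 1 then 1 else 0]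
  refine sum_congr rfl fun P _ ↦ ?_
  split_ifs <;> simp_all

theorem card_subtype_card_parts_eq_stirlingSecond (s : Finset α) (k : ℕ) :
    Nat.card {P : Finpartition s // #P.parts = k} = (#s).stirlingSecond k := by
  induction s using Finset.induction_on generalizing k with
  | empty =>
    have h (P : Finpartition (∅ : Finset α)) : P.parts = ∅ := P.parts_eq_empty_iff.2 rfl
    rw [card_empty]
    cases k with
    | zero =>
      exact Nat.card_eq_one_iff_unique.2
        ⟨⟨fun P Q ↦ Subtype.ext (Finpartition.ext (by rw [h, h]))⟩, ⟨⟨Finpartition.empty _, rfl⟩⟩⟩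
    | succ k => exact Nat.card_eq_zero.2 (Or.inl ⟨fun ⟨P, hP⟩ ↦ by simp [h] at hP⟩)
  | insert a s ha ih =>
    rw [card_insert_of_notMem ha]
    cases k with
    | zero =>
      refine Nat.card_eq_zero.2 (Or.inl ⟨fun ⟨P, hP⟩ ↦ ?_⟩)
      exact insert_ne_empty a s (P.parts_eq_empty_iff.1 (card_eq_zero.1 hP))
    | succ k => rw [card_subtype_card_parts_insert ha, ih, ih, Nat.stirlingSecond_succ_succ]

theorem card_eq_sum_stirlingSecond (s : Finset α) :
    Nat.card (Finpartition s) = ∑ k ∈ range (#s + 1), (#s).stirlingSecond k := by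
  simp only [← card_subtype_card_parts_eq_stirlingSecond, Nat.card_eq_fintype_card,
    Fintype.card_subtype]
  exact card_eq_sum_card_fiberwise fun P _ ↦ mem_range.2 (Nat.lt_succ_of_le P.card_parts_le_card)

end Finpartition

namespace Nat

open Finset

theorem stirlingSecond_succ_succ_eq_sum_choose (n k : ℕ) :
    stirlingSecond (n + 1) (k + 1) = ∑ j ∈ range (n + 1), n.choose j * stirlingSecond j k := by
  induction n generalizing k with
  | zero => simp [stirlingSecond_succ_succ]
  | succ n ih =>
    have pascal := sum_choose_succ_mul (fun j _ ↦ stirlingSecond j k) n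
    simp only [cast_id] at pascal
    rw [pascal]
    cases k with
    | zero => simp [stirlingSecond_one_right, sum_range_succ']
    | succ k =>
      simp only [stirlingSecond_succ_succ (n + 1), ih, stirlingSecond_succ_succ _ k, mul_add,
        sum_add_distrib, mul_left_comm _ (k + 1), ← mul_sum]
      ring

theorem sum_range_stirlingSecond_of_lt {n m : ℕ} (h : n < m) :
    ∑ k ∈ range m, stirlingSecond n k = ∑ k ∈ range (n + 1), stirlingSecond n k :=
  (sum_subset (range_subset_range.2 h) fun _ _ hk ↦
    stirlingSecond_eq_zero_of_lt (by simpa using hk)).symm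

theorem sum_range_stirlingSecond_succ (n : ℕ) :
    ∑ k ∈ range (n + 2), stirlingSecond (n + 1) k =
      ∑ j ∈ range (n + 1), n.choose j * ∑ k ∈ range (j + 1), stirlingSecond j k := by
  rw [sum_range_succ', stirlingSecond_succ_zero, add_zero]
  simp only [stirlingSecond_succ_succ_eq_sum_choose, mul_sum]
  rw [sum_comm]
  refine sum_congr rfl fun j hj ↦ ?_
  rw [← mul_sum, ← mul_sum, sum_range_stirlingSecond_of_lt (mem_range.1 hj)]

end Nat

namespace PowerSeries

open Finset

theorem derivative_mk_eq_exp_mul {K : Type*} [Field K] [CharZero K] {a : ℕ → K}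
    (h : ∀ n, a (n + 1) = ∑ j ∈ range (n + 1), n.choose j * a j) :
    d⁄dX K (mk fun n ↦ a n / n !) = exp K * mk fun n ↦ a n / n ! := by
  ext n
  rw [coeff_derivative, coeff_mk, mul_comm (exp K), coeff_mul,
    Finset.Nat.sum_antidiagonal_eq_sum_range_succ_mk, h, sum_div, sum_mul]
  refine Finset.sum_congr rfl fun j hj ↦ ?_
  have hjn : j ≤ n := Nat.lt_succ_iff.1 (mem_range.1 hj)
  rw [coeff_mk, coeff_exp, Nat.cast_choose K hjn, Nat.factorial_succ]
  push_cast
  field_simp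
  rw [mul_assoc, mul_div_mul_left _ _ (Nat.cast_ne_zero.2 n.factorial_ne_zero)]

end PowerSeries

/-- for the ECO-system with axiom (1) and rule (k) ↝ (k)^{k-1}(k+1),
the number f n (k+1) of nodes at level n labeled k+1 is the Stirling number of the
second kind S(n,k) (the number of partitions of an n-set into k nonempty blocks);
consequently the total count t n is the Bell number B_n (the number of set partitions
of an n-set), whose exponential generating function E satisfies E' = e^z·E with
E(0) = 1 (i.e. E = exp(e^z - 1)), equivalently the Bell recurrence
t_{n+1} = ∑_{j≤n} binom(n,j) t_j holds. -/
theorem stmt_17 (f : ℕ → ℕ → ℕ)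
    (h0 : ∀ k, f 0 k = if k = 1 then 1 else 0)
    (hstep : ∀ n k, f (n + 1) k = (k - 1) * f n k + (if 1 ≤ k then f n (k - 1) else 0))
    (t : ℕ → ℕ) (ht : ∀ n, t n = ∑ k ∈ Finset.range (n + 2), f n k) :
    (∀ n k, f n (k + 1) =
      Nat.card {P : Finpartition (Finset.univ : Finset (Fin n)) // P.parts.card = k}) ∧
    (∀ n, t n = Nat.card (Finpartition (Finset.univ : Finset (Fin n)))) ∧
    (derivativeFun (mk fun n => (t n : ℚ) / (Nat.factorial n : ℚ))
        = exp ℚ * mk fun n => (t n : ℚ) / (Nat.factorial n : ℚ)) ∧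
    (∀ n, t (n + 1) = ∑ j ∈ Finset.range (n + 1), Nat.choose n j * t j) := by
  have hf0 : ∀ n, f n 0 = 0 := by
    rintro (_ | n) <;> simp [h0, hstep]
  have hf : ∀ n k, f n (k + 1) = n.stirlingSecond k := by
    intro n
    induction n with
    | zero => rintro (_ | k) <;> simp [h0]
    | succ n ih =>
      rintro (_ | k)
      · simp [hstep, hf0]
      · simp [hstep, ih, Nat.stirlingSecond_succ_succ]
  have ht' (n : ℕ) : t n = ∑ k ∈ Finset.range (n + 1), n.stirlingSecond k := by
    rw [ht, Finset.sum_range_succ', hf0, add_zero]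
    simp only [hf]
  have hbell (n : ℕ) : t (n + 1) = ∑ j ∈ Finset.range (n + 1), n.choose j * t j := by
    simp only [ht']
    exact Nat.sum_range_stirlingSecond_succ n
  have hcard (n : ℕ) : #(Finset.univ : Finset (Fin n)) = n := by simp
  refine ⟨fun n k ↦ ?_, fun n ↦ ?_, derivative_mk_eq_exp_mul fun n ↦ by exact_mod_cast hbell n,
    hbell⟩
  · rw [hf, Finpartition.card_subtype_card_parts_eq_stirlingSecond, hcard]
  · rw [ht', Finpartition.card_eq_sum_stirlingSecond, hcard]
end

section
/- For the Fredholm ECO-system with axiom (2) and rules (k) ↝ (2)^{k-2}(3 - [k is a power of 2])(k+1) for k ≥ 2, the generating function satisfies F(z) = (1-z)²h(z) / ((1-2z)(1-z)²h(z) - z⁴), where h(z) = ∑_{p≥1} z^{2^p}; in particular F is a rational function of z and h, and the component series satisfy F_k(z) = z^{k-3}F_3(z) for k ≥ 3. -/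
/-! Since a label `k ≥ 4` at level `n + 1` only arises from the label `k - 1` at level `n`, the
labels `i + 3` at level `n` are copies of the labels `3` at level `n - i`. Hence every weighted
level sum `∑ₖ w(k) f(n, k)` is `w(2) [zⁿ]F₂ + [zⁿ] W·F₃` with `W = ∑ᵢ w(i + 3) zⁱ`. The rules for
the labels 2 and 3 thus become two linear equations for `F₂` and `F₃` whose coefficients involve
`1/(1 - z)`, `1/(1 - z)²` and `(h - z²)/z³`, while `F = F₂ + F₃/(1 - z)`; eliminating `F₂`
and `F₃` gives the closed form. -/

open PowerSeries Finset
open scoped Classical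

theorem exists_eq_two_pow_iff_succ {m : ℕ} (hm : 2 ≤ m) :
    (∃ p, m = 2 ^ p) ↔ ∃ p, m = 2 ^ (p + 1) := by
  refine ⟨?_, fun ⟨p, hp⟩ => ⟨p + 1, hp⟩⟩
  rintro ⟨_ | p, rfl⟩
  · omega
  · exact ⟨p, rfl⟩

theorem sum_range_add_three {M : Type*} [AddCommMonoid M] (g : ℕ → M) (n : ℕ) :
    ∑ k ∈ range (n + 3), g k = g 0 + g 1 + g 2 + ∑ i ∈ range n, g (i + 3) := by
  rw [add_comm n 3, sum_range_add]
  simp [sum_range_succ, add_comm]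

theorem coeff_mk_mul_mk {R : Type*} [Semiring R] (a b : ℕ → R) (n : ℕ) :
    coeff n (mk a * mk b) = ∑ i ∈ range (n + 1), a i * b (n - i) := by
  simp [coeff_mul, Nat.sum_antidiagonal_eq_sum_range_succ_mk]

theorem fredholm_relation {R : Type*} [CommRing R] {X Q A B F G : R}
    (hQ : Q * (1 - X) = 1) (hF : F = A + Q * B)
    (hA : A = 1 + X * (A + (Q ^ 2 + G) * B)) (hB : B = X * (A + (Q - G) * B)) :
    F * ((1 - 2 * X) * (1 - X) ^ 2 * (1 + X * G) - X ^ 2) = (1 - X) ^ 2 * (1 + X * G) := by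
  have cancel {a b : R} (h : (1 - X) * a = (1 - X) * b) : a = b := by
    linear_combination Q * h - (a - b) * hQ
  have hF' : (1 - X) * F = (1 - X) * A + B := by linear_combination (1 - X) * hF + B * hQ
  have hB' : B * (1 - 2 * X + (1 - X) * X * G) = (1 - X) * X * A := by
    linear_combination (1 - X) * hB + X * B * hQ
  have hA' : (1 - X) ^ 3 * A = (1 - X) ^ 2 + X * B * (1 + (1 - X) ^ 2 * G) := by
    linear_combination (1 - X) ^ 2 * hA + X * B * ((1 - X) * Q + 1) * hQ
  have hFA : (1 - X) * A * (1 + X * G) = F * ((1 - X) * (1 + X * G) - X) := by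
    apply cancel
    linear_combination (-(1 - X) * (1 + X * G) + X) * hF' - hB'
  have hAF : A * ((1 - X) ^ 2 * (1 + X * G) + X) = 1 - X + X * F * (1 + (1 - X) ^ 2 * G) := by
    apply cancel
    linear_combination hA' - X * (1 + (1 - X) ^ 2 * G) * hF'
  linear_combination (1 - X) * (1 + X * G) * hAF - (X + (1 - X) ^ 2 * (1 + X * G)) * hFA

noncomputable def powTwoTail : ℚ⟦X⟧ :=
  mk fun i => if ∃ p, i + 3 = 2 ^ p then 1 else 0

theorem fredholm_eq_X_sq_mul :
    (mk fun n => if ∃ p, n = 2 ^ (p + 1) then (1 : ℚ) else 0) = X ^ 2 * (1 + X * powTwoTail) := by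
  have two_le (p : ℕ) : 2 ≤ 2 ^ (p + 1) := Nat.le_self_pow (by omega) 2
  ext m
  rw [coeff_mk, coeff_X_pow_mul']
  rcases m with _ | _ | _ | i
  iterate 2
    rw [if_neg (fun ⟨p, hp⟩ => by have := two_le p; omega), if_neg (by omega)]
  · rw [if_pos ⟨0, rfl⟩, if_pos le_rfl]
    simp
  · rw [if_pos (by omega : 2 ≤ i + 3), ← exists_eq_two_pow_iff_succ (by omega : 2 ≤ i + 3)]
    simp [powTwoTail]

section Levels

variable {f : ℕ → ℕ → ℕ}

theorem eq_zero_of_add_three_le (h0 : ∀ k, f 0 k = if k = 2 then 1 else 0)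
    (hstep : ∀ n k, 4 ≤ k → f (n + 1) k = f n (k - 1)) {n k : ℕ} (hk : n + 3 ≤ k) :
    f n k = 0 := by
  induction n generalizing k with
  | zero => rw [h0, if_neg (by omega)]
  | succ n ih => rw [hstep n k (by omega)]; exact ih (by omega)

theorem apply_add_three (hstep : ∀ n k, 4 ≤ k → f (n + 1) k = f n (k - 1)) {n i : ℕ}
    (hi : i ≤ n) : f n (i + 3) = f (n - i) 3 := by
  induction i generalizing n with
  | zero => rfl
  | succ i ih =>
    obtain ⟨m, rfl⟩ : ∃ m, n = m + 1 := Nat.exists_eq_succ_of_ne_zero (by omega)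
    rw [hstep m _ (by omega), Nat.add_sub_add_right, ← ih (by omega)]
    rfl

theorem sum_range_mul_eq (h0 : ∀ k, f 0 k = if k = 2 then 1 else 0)
    (hzero : ∀ n, f n 0 = 0 ∧ f n 1 = 0) (hstep : ∀ n k, 4 ≤ k → f (n + 1) k = f n (k - 1))
    (w : ℕ → ℕ) (n : ℕ) :
    ∑ k ∈ range (n + 3), w k * f n k =
      w 2 * f n 2 + ∑ i ∈ range (n + 1), w (i + 3) * f (n - i) 3 := by
  rw [sum_range_add_three, sum_range_succ, Nat.sub_self, h0, if_neg (by decide), (hzero n).1,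
    (hzero n).2]
  simp only [mul_zero, zero_add, add_zero]
  congr 1
  refine sum_congr rfl fun i hi => ?_
  rw [apply_add_three hstep (mem_range.mp hi).le]

noncomputable def levelSeries (f : ℕ → ℕ → ℕ) (k : ℕ) : ℚ⟦X⟧ :=
  mk fun n => (f n k : ℚ)

theorem mk_sum_range_mul_eq (h0 : ∀ k, f 0 k = if k = 2 then 1 else 0)
    (hzero : ∀ n, f n 0 = 0 ∧ f n 1 = 0) (hstep : ∀ n k, 4 ≤ k → f (n + 1) k = f n (k - 1))
    (w : ℕ → ℕ) :
    (mk fun n => ((∑ k ∈ range (n + 3), w k * f n k : ℕ) : ℚ)) =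
      C (w 2 : ℚ) * levelSeries f 2 + (mk fun i => (w (i + 3) : ℚ)) * levelSeries f 3 := by
  ext n
  rw [coeff_mk, sum_range_mul_eq h0 hzero hstep, map_add, coeff_C_mul, levelSeries,
    levelSeries, coeff_mk_mul_mk, coeff_mk]
  push_cast
  rfl

theorem mk_total_eq (h0 : ∀ k, f 0 k = if k = 2 then 1 else 0)
    (hzero : ∀ n, f n 0 = 0 ∧ f n 1 = 0) (hstep : ∀ n k, 4 ≤ k → f (n + 1) k = f n (k - 1))
    {t : ℕ → ℕ} (ht : ∀ n, t n = ∑ k ∈ range (n + 3), f n k) :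
    (mk fun n => (t n : ℚ)) = levelSeries f 2 + (mk 1 : ℚ⟦X⟧) * levelSeries f 3 := by
  have := mk_sum_range_mul_eq h0 hzero hstep 1
  simp only [Pi.one_apply, one_mul, Nat.cast_one, map_one, ← ht] at this
  exact this

theorem levelSeries_two_eq (h0 : ∀ k, f 0 k = if k = 2 then 1 else 0)
    (hzero : ∀ n, f n 0 = 0 ∧ f n 1 = 0) (hstep : ∀ n k, 4 ≤ k → f (n + 1) k = f n (k - 1))
    (hstep2 : ∀ n, f (n + 1) 2 = ∑ k ∈ range (n + 3),
      ((k - 2) * f n k + if ∃ p, k = 2 ^ p then f n k else 0)) :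
    levelSeries f 2 =
      1 + X * (levelSeries f 2 + ((mk 1 : ℚ⟦X⟧) ^ 2 + powTwoTail) * levelSeries f 3) := by
  set w : ℕ → ℕ := fun k => k - 2 + if ∃ p, k = 2 ^ p then 1 else 0
  have hshift : (mk fun n => coeff (n + 1) (levelSeries f 2)) =
      mk fun n => ((∑ k ∈ range (n + 3), w k * f n k : ℕ) : ℚ) := by
    ext n
    simp only [levelSeries, coeff_mk, hstep2, w, add_mul, ite_mul, one_mul, zero_mul]
  have hw2 : w 2 = 1 := by simp only [w]; rw [if_pos ⟨1, rfl⟩]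
  have hW : (mk fun i => (w (i + 3) : ℚ)) = (mk 1 : ℚ⟦X⟧) ^ 2 + powTwoTail := by
    ext i
    simp [w, powTwoTail, mk_one_pow_eq_mk_choose_add ℚ 1, add_comm]
  nth_rewrite 1 [eq_X_mul_shift_add_const (levelSeries f 2)]
  rw [hshift, mk_sum_range_mul_eq h0 hzero hstep, hw2, hW]
  simp only [Nat.cast_one, map_one, levelSeries, one_mul, constantCoeff_mk, h0, ↓reduceIte]
  ring

theorem levelSeries_three_eq (h0 : ∀ k, f 0 k = if k = 2 then 1 else 0)
    (hzero : ∀ n, f n 0 = 0 ∧ f n 1 = 0) (hstep : ∀ n k, 4 ≤ k → f (n + 1) k = f n (k - 1))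
    (hstep3 : ∀ n, f (n + 1) 3 = f n 2 +
      ∑ k ∈ (range (n + 3)).filter (fun k => 2 ≤ k ∧ ¬ ∃ p, k = 2 ^ p), f n k) :
    levelSeries f 3 = X * (levelSeries f 2 + ((mk 1 : ℚ⟦X⟧) - powTwoTail) * levelSeries f 3) := by
  set w : ℕ → ℕ := fun k => if 2 ≤ k ∧ ¬ ∃ p, k = 2 ^ p then 1 else 0
  have hshift : (mk fun n => coeff (n + 1) (levelSeries f 3)) =
      levelSeries f 2 + mk fun n => ((∑ k ∈ range (n + 3), w k * f n k : ℕ) : ℚ) := by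
    ext n
    simp only [levelSeries, coeff_mk, map_add, hstep3, sum_filter, w, ite_mul, one_mul,
      zero_mul, Nat.cast_add]
  have hw2 : w 2 = 0 := if_neg fun h => h.2 ⟨1, rfl⟩
  have hW : (mk fun i => (w (i + 3) : ℚ)) = (mk 1 : ℚ⟦X⟧) - powTwoTail := by
    ext i
    simp only [w, powTwoTail, coeff_mk, map_sub, Pi.one_apply]
    split_ifs <;> simp_all
  nth_rewrite 1 [eq_X_mul_shift_add_const (levelSeries f 3)]
  rw [hshift, mk_sum_range_mul_eq h0 hzero hstep, hw2, hW]
  simp [levelSeries, h0]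

end Levels

/-- the Fredholm ECO-system with axiom (2) and rules
(k) ↝ (2)^{k-2}(3 - [k is a power of 2])(k+1). With f n k the number of nodes at
level n labeled k, t n the total count, h(z) = ∑_{p≥1} z^{2^p} the Fredholm series
and F(z) = ∑ t n z^n, one has F_k(z) = z^{k-3} F_3(z) for k ≥ 3 (i.e.
f_{n+1,k+1} = f_{n,k}) and F·((1-2z)(1-z)²h - z⁴) = (1-z)²h. -/
theorem stmt_18 (f : ℕ → ℕ → ℕ)
    (h0 : ∀ k, f 0 k = if k = 2 then 1 else 0)
    (hzero : ∀ n, f n 0 = 0 ∧ f n 1 = 0)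
    (hstep2 : ∀ n, f (n + 1) 2 = ∑ k ∈ Finset.range (n + 3),
      ((k - 2) * f n k + if ∃ p, k = 2 ^ p then f n k else 0))
    (hstep3 : ∀ n, f (n + 1) 3 = f n 2 +
      ∑ k ∈ (Finset.range (n + 3)).filter (fun k => 2 ≤ k ∧ ¬ ∃ p, k = 2 ^ p), f n k)
    (hstep : ∀ n k, 4 ≤ k → f (n + 1) k = f n (k - 1))
    (t : ℕ → ℕ) (ht : ∀ n, t n = ∑ k ∈ Finset.range (n + 3), f n k)
    (h F : PowerSeries ℚ)
    (hh : h = mk fun n => if ∃ p, n = 2 ^ (p + 1) then (1 : ℚ) else 0)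
    (hF : F = mk fun n => (t n : ℚ)) :
    (∀ n k, 3 ≤ k → f (n + 1) (k + 1) = f n k) ∧
    F * ((1 - 2 * X) * (1 - X) ^ 2 * h - X ^ 4) = (1 - X) ^ 2 * h := by
  refine ⟨fun n k hk => by simpa using hstep n (k + 1) (by omega), ?_⟩
  rw [hh, hF, fredholm_eq_X_sq_mul, mk_total_eq h0 hzero hstep ht]
  have := fredholm_relation (mk_one_mul_one_sub_eq_one ℚ) rfl
    (levelSeries_two_eq h0 hzero hstep hstep2) (levelSeries_three_eq h0 hzero hstep hstep3)
  linear_combination X ^ 2 * this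
end
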